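/- arXiv:2304.05789 — 4 statements merged into one kernel-verified Lean document; each statement's English description precedes it below -/
import Mathlib

section
/- Energy dissipation law for the Landau–Lifshitz–Gilbert equation with Dzyaloshinskii–Moriya interaction: Let M : [0,T]×Ω → ℝ³ be continuously differentiable in time and twice continuously differentiable in space (with continuous mixed time–space derivatives), and suppose M satisfies the LLG equation ∂M/∂t = −γ M × 𝓗 + (α/Ms) M × ∂M/∂t in [0,T]×Ω together with the chiral boundary condition ∂M/∂ν = −(D/(2A)) M × ν on [0,T]×∂Ω, where γ > 0, α ≥ 0. Assume the applied field H ∈ ℝ³ is constant in time and the stray field H_s satisfies the reciprocity relation. Then the free energy t ↦ F[M(t,·)] satisfies dF/dt = −(α/(γ Ms)) ∫_Ω |∂M/∂t|² dx ≤ 0 for all t ∈ (0,T); in particular F[M(t,·)] is nonincreasing in t. -/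
open MeasureTheory Matrix

noncomputable section

/-- Vectors in ℝ³, represented as functions `Fin 3 → ℝ`. -/
abbrev V3 : Type := Fin 3 → ℝ

/-- The `i`-th standard basis vector of ℝ³. -/
def unitVec (i : Fin 3) : V3 := Pi.single i 1

/-- The `i`-th partial derivative of a vector field. -/
def pder (i : Fin 3) (f : V3 → V3) (x : V3) : V3 :=
  fderiv ℝ f x (unitVec i)

/-- The curl `∇ × f` of a vector field on ℝ³. -/
def curl3 (f : V3 → V3) (x : V3) : V3 :=
  ![pder 1 f x 2 - pder 2 f x 1,
    pder 2 f x 0 - pder 0 f x 2,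
    pder 0 f x 1 - pder 1 f x 0]

/-- The componentwise Laplacian `Δf` of a vector field on ℝ³. -/
def lap3 (f : V3 → V3) (x : V3) : V3 :=
  ∑ j : Fin 3, pder j (pder j f) x

/-- The squared Frobenius norm `|∇f|²` of the spatial Jacobian of a vector field. -/
def gradSq (f : V3 → V3) (x : V3) : ℝ :=
  ∑ i : Fin 3, ∑ j : Fin 3, (pder j f x i) ^ 2

/-- The surface integral `∫_{∂Ω} G · ν dS` over the boundary of the box
`Ω = [0, L 0] × [0, L 1] × [0, L 2]`, computed as the sum over the six faces,
`ν` being the outward unit normal. -/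
def bdryInt (L : V3) (G : V3 → V3) : ℝ :=
    (∫ y in Set.Icc (0:ℝ) (L 1), ∫ z in Set.Icc (0:ℝ) (L 2),
      (G ![L 0, y, z] 0 - G ![0, y, z] 0))
  + (∫ x in Set.Icc (0:ℝ) (L 0), ∫ z in Set.Icc (0:ℝ) (L 2),
      (G ![x, L 1, z] 1 - G ![x, 0, z] 1))
  + (∫ x in Set.Icc (0:ℝ) (L 0), ∫ y in Set.Icc (0:ℝ) (L 1),
      (G ![x, y, L 2] 2 - G ![x, y, 0] 2))

/-- The chiral boundary condition `∂f/∂ν = -κb f × ν` on the boundary of the box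
`Ω = [0, L 0] × [0, L 1] × [0, L 2]`: on the face `x i = L i` the outward normal is
`ν = unitVec i`, and on the face `x i = 0` it is `ν = -unitVec i`; `∂f/∂ν` is the
directional derivative of `f` along `ν`. -/
def chiralBC (L : V3) (κb : ℝ) (f : V3 → V3) : Prop :=
  ∀ x ∈ Set.Icc (0 : V3) L, ∀ i : Fin 3,
    (x i = L i → fderiv ℝ f x (unitVec i) = (-κb) • ((f x) ⨯₃ (unitVec i)))
    ∧ (x i = 0 → fderiv ℝ f x (-(unitVec i)) = (-κb) • ((f x) ⨯₃ (-(unitVec i))))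

/-- The effective field `𝓗 = (2A/Ms²)ΔM − (2K_u/Ms²)(M₂e₂ + M₃e₃) + μ₀H + μ₀H_s − (2D/Ms²)∇×M`. -/
def Heff (A D Ku μ0 Ms : ℝ) (H : V3) (Hs : V3 → V3) (f : V3 → V3) (x : V3) : V3 :=
  (2*A/Ms^2) • lap3 f x - (2*Ku/Ms^2) • ((f x 1) • unitVec 1 + (f x 2) • unitVec 2)
    + μ0 • H + μ0 • Hs x - (2*D/Ms^2) • curl3 f x

/-- The magnetic free energy
`F[M] = ∫_Ω (A/Ms²)|∇M|² + (D/Ms²)(∇×M)·M − μ₀H·M − (μ₀/2)H_s·M + (K_u/Ms²)(M₂²+M₃²) dx`. -/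
def Fenergy (A D Ku μ0 Ms : ℝ) (H : V3) (L : V3) (Hs : V3 → V3) (f : V3 → V3) : ℝ :=
  ∫ x in Set.Icc (0:V3) L,
    ((A/Ms^2) * gradSq f x + (D/Ms^2) * ((curl3 f x) ⬝ᵥ (f x))
      - μ0 * (H ⬝ᵥ (f x)) - (μ0/2) * ((Hs x) ⬝ᵥ (f x))
      + (Ku/Ms^2) * ((f x 1)^2 + (f x 2)^2))

namespace LLG
open ContinuousLinearMap

abbrev E3 := ℝ × V3

def J (u : E3 → V3) (p : E3) : E3 →L[ℝ] V3 := fderiv ℝ u p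
def S (u : E3 → V3) (p : E3) : E3 →L[ℝ] E3 →L[ℝ] V3 := fderiv ℝ (fderiv ℝ u) p

/-- spatial partial `∂_j u` -/
def Pv (u : E3 → V3) (j : Fin 3) (p : E3) : V3 := J u p (0, unitVec j)
/-- time partial `∂_t u` -/
def Vv (u : E3 → V3) (p : E3) : V3 := J u p (1, 0)
/-- mixed partial `∂_t ∂_j u` -/
def Qv (u : E3 → V3) (j : Fin 3) (p : E3) : V3 := S u p (1, 0) (0, unitVec j)

section
variable {u : E3 → V3} (hu : ContDiff ℝ 2 u)
include hu

lemma hdiff1 : Differentiable ℝ u := hu.differentiable (by norm_num)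
lemma hJat (p : E3) : HasFDerivAt u (J u p) p := (hdiff1 hu p).hasFDerivAt
lemma hCD1 : ContDiff ℝ 1 (fderiv ℝ u) := hu.fderiv_right (le_refl _)
lemma hSat (p : E3) : HasFDerivAt (fderiv ℝ u) (S u p) p :=
  (((hCD1 hu).differentiable (by norm_num)) p).hasFDerivAt
lemma hSsymm (p : E3) (a b : E3) : S u p a b = S u p b a :=
  second_derivative_symmetric (fun y => hJat hu y) (hSat hu p) a b
lemma hJcont : Continuous (J u) := (hCD1 hu).continuous
lemma hScont : Continuous (S u) := (hCD1 hu).continuous_fderiv (by norm_num)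
lemma hucont : Continuous u := hu.continuous

lemma hspace (t : ℝ) (x : V3) :
    HasFDerivAt (fun y => u (t, y)) ((J u (t,x)).comp (inr ℝ ℝ V3)) x :=
  (hJat hu (t,x)).comp x (hasFDerivAt_prodMk_right t x)

lemma pder_eq (t : ℝ) (x : V3) (j : Fin 3) :
    pder j (fun y => u (t, y)) x = Pv u j (t, x) := by
  rw [pder, (hspace hu t x).fderiv]; rfl

lemma hspaceP (t : ℝ) (x : V3) (c : E3) :
    HasFDerivAt (fun y => J u (t,y) c) (((S u (t,x)).flip c).comp (inr ℝ ℝ V3)) x := by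
  have h1 : HasFDerivAt (fun y => fderiv ℝ u (t, y)) ((S u (t,x)).comp (inr ℝ ℝ V3)) x :=
    (hSat hu (t,x)).comp x (hasFDerivAt_prodMk_right t x)
  have h2 := h1.clm_apply (hasFDerivAt_const c x)
  exact h2.congr_fderiv (by ext w; simp [J])

/-- second spatial partials -/
lemma pder2_eq (t : ℝ) (x : V3) (j k : Fin 3) :
    pder k (fun y => J u (t,y) (0, unitVec j)) x = S u (t,x) (0, unitVec k) (0, unitVec j) := by
  rw [pder, (hspaceP hu t x (0, unitVec j)).fderiv]; rfl

lemma pder2_eq' (t : ℝ) (x : V3) (j k : Fin 3) :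
    pder k (pder j (fun y => u (t, y))) x = S u (t,x) (0, unitVec k) (0, unitVec j) := by
  have : pder j (fun y => u (t, y)) = fun y => J u (t,y) (0, unitVec j) := by
    funext y; exact pder_eq hu t y j
  rw [this, pder2_eq hu]

lemma htime (t : ℝ) (x : V3) :
    HasDerivAt (fun s => u (s, x)) (Vv u (t,x)) t := by
  have h1 : HasFDerivAt (fun s : ℝ => u (s, x)) ((J u (t,x)).comp (inl ℝ ℝ V3)) t :=
    (hJat hu (t,x)).comp t (hasFDerivAt_prodMk_left t x)
  have := h1.hasDerivAt
  simpa [Vv] using this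

lemma htimeP (t : ℝ) (x : V3) (c : E3) :
    HasDerivAt (fun s => J u (s, x) c) (S u (t,x) (1, 0) c) t := by
  have h1 : HasFDerivAt (fun s : ℝ => fderiv ℝ u (s, x)) ((S u (t,x)).comp (inl ℝ ℝ V3)) t :=
    (hSat hu (t,x)).comp t (hasFDerivAt_prodMk_left t x)
  have h2 := (h1.clm_apply (hasFDerivAt_const c t)).hasDerivAt
  exact h2.congr_deriv (by simp)

lemma deriv_time (t : ℝ) (x : V3) :
    deriv (fun s => u (s, x)) t = Vv u (t,x) := (htime hu t x).deriv

/-- scalar component versions, time direction -/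
lemma hmt (t : ℝ) (x : V3) (i : Fin 3) :
    HasDerivAt (fun s => u (s, x) i) (Vv u (t,x) i) t :=
  (ContinuousLinearMap.proj (R := ℝ) (φ := fun _ : Fin 3 => ℝ) i).hasFDerivAt.comp_hasDerivAt t (htime hu t x)

lemma hPt (t : ℝ) (x : V3) (j i : Fin 3) :
    HasDerivAt (fun s => Pv u j (s, x) i) (Qv u j (t,x) i) t :=
  (ContinuousLinearMap.proj (R := ℝ) (φ := fun _ : Fin 3 => ℝ) i).hasFDerivAt.comp_hasDerivAt t (htimeP hu t x (0, unitVec j))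

end

/-- clean CLMs for spatial scalar derivatives -/
def Cm (u : E3 → V3) (p : E3) (i : Fin 3) : V3 →L[ℝ] ℝ :=
  (proj i).comp ((J u p).comp (inr ℝ ℝ V3))
def CP (u : E3 → V3) (p : E3) (c : E3) (i : Fin 3) : V3 →L[ℝ] ℝ :=
  (proj i).comp (((S u p).flip c).comp (inr ℝ ℝ V3))

@[simp] lemma Cm_apply (u : E3 → V3) (p : E3) (i : Fin 3) (w : V3) :
    Cm u p i w = J u p (0, w) i := rfl
@[simp] lemma CP_apply (u : E3 → V3) (p : E3) (c : E3) (i : Fin 3) (w : V3) :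
    CP u p c i w = S u p (0, w) c i := rfl

section
variable {u : E3 → V3} (hu : ContDiff ℝ 2 u)
include hu

lemma hmx (t : ℝ) (x : V3) (i : Fin 3) :
    HasFDerivAt (fun y => u (t, y) i) (Cm u (t,x) i) x :=
  (ContinuousLinearMap.proj (R := ℝ) (φ := fun _ : Fin 3 => ℝ) i).hasFDerivAt.comp x (hspace hu t x)

lemma hPx (t : ℝ) (x : V3) (j i : Fin 3) :
    HasFDerivAt (fun y => Pv u j (t, y) i) (CP u (t,x) (0, unitVec j) i) x :=
  (ContinuousLinearMap.proj (R := ℝ) (φ := fun _ : Fin 3 => ℝ) i).hasFDerivAt.comp x (hspaceP hu t x (0, unitVec j))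

lemma hVx (t : ℝ) (x : V3) (i : Fin 3) :
    HasFDerivAt (fun y => Vv u (t, y) i) (CP u (t,x) (1,0) i) x :=
  (ContinuousLinearMap.proj (R := ℝ) (φ := fun _ : Fin 3 => ℝ) i).hasFDerivAt.comp x (hspaceP hu t x (1, 0))

end
end LLG
namespace LLG
/-- energy density (without stray field term) -/
def rDen (A D Ku μ0 Ms : ℝ) (H : V3) (u : E3 → V3) (p : E3) : ℝ :=
  A/Ms^2 * (((Pv u 0 p 0)^2 + (Pv u 1 p 0)^2 + (Pv u 2 p 0)^2)
    + ((Pv u 0 p 1)^2 + (Pv u 1 p 1)^2 + (Pv u 2 p 1)^2)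
    + ((Pv u 0 p 2)^2 + (Pv u 1 p 2)^2 + (Pv u 2 p 2)^2))
  + D/Ms^2 * ((Pv u 1 p 2 - Pv u 2 p 1) * u p 0 + (Pv u 2 p 0 - Pv u 0 p 2) * u p 1
      + (Pv u 0 p 1 - Pv u 1 p 0) * u p 2)
  - μ0 * (H 0 * u p 0 + H 1 * u p 1 + H 2 * u p 2)
  + Ku/Ms^2 * ((u p 1)^2 + (u p 2)^2)

/-- time derivative of the energy density -/
def rtDen (A D Ku μ0 Ms : ℝ) (H : V3) (u : E3 → V3) (p : E3) : ℝ :=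
  2*(A/Ms^2) * (Pv u 0 p ⬝ᵥ Qv u 0 p + Pv u 1 p ⬝ᵥ Qv u 1 p + Pv u 2 p ⬝ᵥ Qv u 2 p)
  + (D/Ms^2) * (((Qv u 1 p 2 - Qv u 2 p 1) * u p 0 + (Qv u 2 p 0 - Qv u 0 p 2) * u p 1
        + (Qv u 0 p 1 - Qv u 1 p 0) * u p 2)
      + ((Pv u 1 p 2 - Pv u 2 p 1) * Vv u p 0 + (Pv u 2 p 0 - Pv u 0 p 2) * Vv u p 1
        + (Pv u 0 p 1 - Pv u 1 p 0) * Vv u p 2))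
  - μ0 * (H 0 * Vv u p 0 + H 1 * Vv u p 1 + H 2 * Vv u p 2)
  + Ku/Ms^2 * (2 * u p 1 * Vv u p 1 + 2 * u p 2 * Vv u p 2)

lemma HasDerivAt.congr_deriv {f : ℝ → ℝ} {a b t : ℝ} (h : HasDerivAt f a t) (e : a = b) :
    HasDerivAt f b t := e ▸ h

section
variable {u : E3 → V3} (hu : ContDiff ℝ 2 u)
  (A D Ku μ0 Ms : ℝ) (H : V3)
include hu

lemma hasDerivAt_rDen (t : ℝ) (x : V3) :
    HasDerivAt (fun s => rDen A D Ku μ0 Ms H u (s, x)) (rtDen A D Ku μ0 Ms H u (t, x)) t := by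
  have h1 :=
    (((((((hPt hu t x 0 0).pow 2).add ((hPt hu t x 1 0).pow 2)).add ((hPt hu t x 2 0).pow 2)).add
        ((((hPt hu t x 0 1).pow 2).add ((hPt hu t x 1 1).pow 2)).add ((hPt hu t x 2 1).pow 2))).add
        ((((hPt hu t x 0 2).pow 2).add ((hPt hu t x 1 2).pow 2)).add
          ((hPt hu t x 2 2).pow 2))).const_mul (A/Ms^2))
  have h2 :=
    (((((hPt hu t x 1 2).sub (hPt hu t x 2 1)).mul (hmt hu t x 0)).add
        ((((hPt hu t x 2 0).sub (hPt hu t x 0 2))).mul (hmt hu t x 1))).add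
        ((((hPt hu t x 0 1).sub (hPt hu t x 1 0))).mul (hmt hu t x 2))).const_mul (D/Ms^2)
  have h3 :=
    ((((hmt hu t x 0).const_mul (H 0)).add ((hmt hu t x 1).const_mul (H 1))).add
        ((hmt hu t x 2).const_mul (H 2))).const_mul μ0
  have h4 := (((hmt hu t x 1).pow 2).add ((hmt hu t x 2).pow 2)).const_mul (Ku/Ms^2)
  exact (((h1.add h2).sub h3).add h4).congr_deriv
    (by simp only [rtDen, dotProduct, Fin.sum_univ_three, Pi.sub_apply]; push_cast; ring)

lemma cont_rDen : Continuous (rDen A D Ku μ0 Ms H u) := by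
  have c1 := hJcont hu; have c2 := hucont hu
  unfold rDen Pv
  fun_prop

lemma cont_rtDen : Continuous (rtDen A D Ku μ0 Ms H u) := by
  have c1 := hJcont hu; have c2 := hucont hu; have c3 := hScont hu
  unfold rtDen Pv Qv Vv
  simp only [dotProduct, Fin.sum_univ_three]
  fun_prop

end
end LLG
namespace LLG
/-- the flux vector field `G` (component `j`) -/
def gDen (A D Ms : ℝ) (u : E3 → V3) (j : Fin 3) (p : E3) : ℝ :=
  2*(A/Ms^2) * (Pv u j p 0 * Vv u p 0 + Pv u j p 1 * Vv u p 1 + Pv u j p 2 * Vv u p 2)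
  + D/Ms^2 * ![Vv u p 1 * u p 2 - Vv u p 2 * u p 1,
               Vv u p 2 * u p 0 - Vv u p 0 * u p 2,
               Vv u p 0 * u p 1 - Vv u p 1 * u p 0] j

/-- `∂_j G_j` -/
def divjDen (A D Ms : ℝ) (u : E3 → V3) (j : Fin 3) (p : E3) : ℝ :=
  2*(A/Ms^2) * (S u p (0, unitVec j) (0, unitVec j) ⬝ᵥ Vv u p
      + Pv u j p ⬝ᵥ S u p (0, unitVec j) (1, 0))
  + D/Ms^2 * (((S u p (0, unitVec j) (1, 0)) ⨯₃ u p) j + (Vv u p ⨯₃ Pv u j p) j)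

section
variable {u : E3 → V3} (hu : ContDiff ℝ 2 u) (A D Ms : ℝ)
include hu

lemma diffAt_gDen (t : ℝ) (x : V3) (j : Fin 3) :
    DifferentiableAt ℝ (fun y => gDen A D Ms u j (t, y)) x := by
  fin_cases j
  · exact ((((((hPx hu t x 0 0).mul (hVx hu t x 0)).add ((hPx hu t x 0 1).mul (hVx hu t x 1))).add
      ((hPx hu t x 0 2).mul (hVx hu t x 2))).const_mul (2*(A/Ms^2))).add
      ((((hVx hu t x 1).mul (hmx hu t x 2)).sub ((hVx hu t x 2).mul (hmx hu t x 1))).const_mul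
        (D/Ms^2))).differentiableAt
  · exact ((((((hPx hu t x 1 0).mul (hVx hu t x 0)).add ((hPx hu t x 1 1).mul (hVx hu t x 1))).add
      ((hPx hu t x 1 2).mul (hVx hu t x 2))).const_mul (2*(A/Ms^2))).add
      ((((hVx hu t x 2).mul (hmx hu t x 0)).sub ((hVx hu t x 0).mul (hmx hu t x 2))).const_mul
        (D/Ms^2))).differentiableAt
  · exact ((((((hPx hu t x 2 0).mul (hVx hu t x 0)).add ((hPx hu t x 2 1).mul (hVx hu t x 1))).add
      ((hPx hu t x 2 2).mul (hVx hu t x 2))).const_mul (2*(A/Ms^2))).add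
      ((((hVx hu t x 0).mul (hmx hu t x 1)).sub ((hVx hu t x 1).mul (hmx hu t x 0))).const_mul
        (D/Ms^2))).differentiableAt

lemma fderiv_gDen_apply0 (t : ℝ) (x : V3) :
    fderiv ℝ (fun y => gDen A D Ms u 0 (t, y)) x (unitVec 0) = divjDen A D Ms u 0 (t, x) := by
  have comb := (((((hPx hu t x 0 0).mul (hVx hu t x 0)).add ((hPx hu t x 0 1).mul (hVx hu t x 1))).add
      ((hPx hu t x 0 2).mul (hVx hu t x 2))).const_mul (2*(A/Ms^2))).add
      ((((hVx hu t x 1).mul (hmx hu t x 2)).sub ((hVx hu t x 2).mul (hmx hu t x 1))).const_mul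
        (D/Ms^2))
  have hf : fderiv ℝ (fun y => gDen A D Ms u 0 (t, y)) x = _ := comb.fderiv
  rw [hf]
  simp only [divjDen, dotProduct, Fin.sum_univ_three, ContinuousLinearMap.add_apply, ContinuousLinearMap.sub_apply,
      ContinuousLinearMap.coe_smul', Pi.smul_apply, Cm_apply, CP_apply, smul_eq_mul,
      crossProduct, Pv, Vv, LinearMap.mk₂_apply, Matrix.cons_val_zero, Matrix.cons_val_one,
      Matrix.head_cons, Matrix.cons_val_two, Matrix.tail_cons]
  ring

lemma fderiv_gDen_apply1 (t : ℝ) (x : V3) :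
    fderiv ℝ (fun y => gDen A D Ms u 1 (t, y)) x (unitVec 1) = divjDen A D Ms u 1 (t, x) := by
  have comb := (((((hPx hu t x 1 0).mul (hVx hu t x 0)).add ((hPx hu t x 1 1).mul (hVx hu t x 1))).add
      ((hPx hu t x 1 2).mul (hVx hu t x 2))).const_mul (2*(A/Ms^2))).add
      ((((hVx hu t x 2).mul (hmx hu t x 0)).sub ((hVx hu t x 0).mul (hmx hu t x 2))).const_mul
        (D/Ms^2))
  have hf : fderiv ℝ (fun y => gDen A D Ms u 1 (t, y)) x = _ := comb.fderiv
  rw [hf]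
  simp only [divjDen, dotProduct, Fin.sum_univ_three, ContinuousLinearMap.add_apply, ContinuousLinearMap.sub_apply,
      ContinuousLinearMap.coe_smul', Pi.smul_apply, Cm_apply, CP_apply, smul_eq_mul,
      crossProduct, Pv, Vv, LinearMap.mk₂_apply, Matrix.cons_val_zero, Matrix.cons_val_one,
      Matrix.head_cons, Matrix.cons_val_two, Matrix.tail_cons]
  ring

lemma fderiv_gDen_apply2 (t : ℝ) (x : V3) :
    fderiv ℝ (fun y => gDen A D Ms u 2 (t, y)) x (unitVec 2) = divjDen A D Ms u 2 (t, x) := by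
  have comb := (((((hPx hu t x 2 0).mul (hVx hu t x 0)).add ((hPx hu t x 2 1).mul (hVx hu t x 1))).add
      ((hPx hu t x 2 2).mul (hVx hu t x 2))).const_mul (2*(A/Ms^2))).add
      ((((hVx hu t x 0).mul (hmx hu t x 1)).sub ((hVx hu t x 1).mul (hmx hu t x 0))).const_mul
        (D/Ms^2))
  have hf : fderiv ℝ (fun y => gDen A D Ms u 2 (t, y)) x = _ := comb.fderiv
  rw [hf]
  simp only [divjDen, dotProduct, Fin.sum_univ_three, ContinuousLinearMap.add_apply, ContinuousLinearMap.sub_apply,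
      ContinuousLinearMap.coe_smul', Pi.smul_apply, Cm_apply, CP_apply, smul_eq_mul,
      crossProduct, Pv, Vv, LinearMap.mk₂_apply, Matrix.cons_val_zero, Matrix.cons_val_one,
      Matrix.head_cons, Matrix.cons_val_two, Matrix.tail_cons]
  ring

lemma fderiv_gDen_apply (t : ℝ) (x : V3) (j : Fin 3) :
    fderiv ℝ (fun y => gDen A D Ms u j (t, y)) x (unitVec j) = divjDen A D Ms u j (t, x) := by
  fin_cases j
  exacts [fderiv_gDen_apply0 hu A D Ms t x, fderiv_gDen_apply1 hu A D Ms t x,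
    fderiv_gDen_apply2 hu A D Ms t x]

lemma cont_gDen0 (t : ℝ) : Continuous (fun y => gDen A D Ms u 0 (t, y)) := by
  have c1 := hJcont hu; have c2 := hucont hu
  unfold gDen Pv Vv
  simp only [Matrix.cons_val_zero, Matrix.cons_val_one, Matrix.head_cons,
    Matrix.cons_val_two, Matrix.tail_cons]
  fun_prop

lemma cont_divjDen0 : Continuous (divjDen A D Ms u 0) := by
  have c1 := hJcont hu; have c2 := hucont hu; have c3 := hScont hu
  unfold divjDen Pv Vv
  simp only [dotProduct, Fin.sum_univ_three, crossProduct, LinearMap.mk₂_apply,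
    Matrix.cons_val_zero, Matrix.cons_val_one, Matrix.head_cons,
    Matrix.cons_val_two, Matrix.tail_cons]
  fun_prop

lemma cont_gDen1 (t : ℝ) : Continuous (fun y => gDen A D Ms u 1 (t, y)) := by
  have c1 := hJcont hu; have c2 := hucont hu
  unfold gDen Pv Vv
  simp only [Matrix.cons_val_zero, Matrix.cons_val_one, Matrix.head_cons,
    Matrix.cons_val_two, Matrix.tail_cons]
  fun_prop

lemma cont_divjDen1 : Continuous (divjDen A D Ms u 1) := by
  have c1 := hJcont hu; have c2 := hucont hu; have c3 := hScont hu
  unfold divjDen Pv Vv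
  simp only [dotProduct, Fin.sum_univ_three, crossProduct, LinearMap.mk₂_apply,
    Matrix.cons_val_zero, Matrix.cons_val_one, Matrix.head_cons,
    Matrix.cons_val_two, Matrix.tail_cons]
  fun_prop

lemma cont_gDen2 (t : ℝ) : Continuous (fun y => gDen A D Ms u 2 (t, y)) := by
  have c1 := hJcont hu; have c2 := hucont hu
  unfold gDen Pv Vv
  simp only [Matrix.cons_val_zero, Matrix.cons_val_one, Matrix.head_cons,
    Matrix.cons_val_two, Matrix.tail_cons]
  fun_prop

lemma cont_divjDen2 : Continuous (divjDen A D Ms u 2) := by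
  have c1 := hJcont hu; have c2 := hucont hu; have c3 := hScont hu
  unfold divjDen Pv Vv
  simp only [dotProduct, Fin.sum_univ_three, crossProduct, LinearMap.mk₂_apply,
    Matrix.cons_val_zero, Matrix.cons_val_one, Matrix.head_cons,
    Matrix.cons_val_two, Matrix.tail_cons]
  fun_prop

lemma cont_gDen (t : ℝ) (j : Fin 3) : Continuous (fun y => gDen A D Ms u j (t, y)) := by
  fin_cases j
  exacts [cont_gDen0 hu A D Ms t, cont_gDen1 hu A D Ms t, cont_gDen2 hu A D Ms t]

lemma cont_divjDen (j : Fin 3) : Continuous (divjDen A D Ms u j) := by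
  fin_cases j
  exacts [cont_divjDen0 hu A D Ms, cont_divjDen1 hu A D Ms, cont_divjDen2 hu A D Ms]

end
end LLG
namespace LLG
/-- effective field without the stray field term -/
def HeffnosDen (A D Ku μ0 Ms : ℝ) (H : V3) (u : E3 → V3) (p : E3) : V3 :=
  (2*A/Ms^2) • (S u p (0, unitVec 0) (0, unitVec 0) + S u p (0, unitVec 1) (0, unitVec 1)
      + S u p (0, unitVec 2) (0, unitVec 2))
  - (2*Ku/Ms^2) • (u p 1 • unitVec 1 + u p 2 • unitVec 2)
  + μ0 • H
  - (2*D/Ms^2) • ![Pv u 1 p 2 - Pv u 2 p 1, Pv u 2 p 0 - Pv u 0 p 2, Pv u 0 p 1 - Pv u 1 p 0]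

section
variable {u : E3 → V3} (hu : ContDiff ℝ 2 u) (A D Ku μ0 Ms : ℝ) (H : V3)
include hu

lemma Heff_eq (t : ℝ) (x : V3) (Hs' : V3 → V3) :
    Heff A D Ku μ0 Ms H Hs' (fun y => u (t, y)) x
      = HeffnosDen A D Ku μ0 Ms H u (t, x) + μ0 • Hs' x := by
  unfold Heff HeffnosDen lap3 curl3
  simp only [Fin.sum_univ_three, pder2_eq' hu, pder_eq hu]
  abel

/-- energy density relation: Fenergy integrand = rDen − (μ0/2) Hs·M -/
lemma rDen_eq (t : ℝ) (x : V3) (Hs' : V3 → V3) :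
    (A/Ms^2) * gradSq (fun y => u (t,y)) x
      + (D/Ms^2) * ((curl3 (fun y => u (t,y)) x) ⬝ᵥ (u (t,x)))
      - μ0 * (H ⬝ᵥ (u (t,x))) - (μ0/2) * ((Hs' x) ⬝ᵥ (u (t,x)))
      + (Ku/Ms^2) * ((u (t,x) 1)^2 + (u (t,x) 2)^2)
    = rDen A D Ku μ0 Ms H u (t, x) - (μ0/2) * ((Hs' x) ⬝ᵥ (u (t,x))) := by
  unfold gradSq curl3 rDen
  simp only [Fin.sum_univ_three, pder_eq hu, dotProduct, Matrix.cons_val_zero,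
    Matrix.cons_val_one, Matrix.head_cons, Matrix.cons_val_two, Matrix.tail_cons]
  ring

/-- the key pointwise identity: `∂_t r = −v·Heffnos + div G` -/
lemma key_rtDen (p : E3) :
    rtDen A D Ku μ0 Ms H u p
      = -(Vv u p ⬝ᵥ HeffnosDen A D Ku μ0 Ms H u p)
        + (divjDen A D Ms u 0 p + divjDen A D Ms u 1 p + divjDen A D Ms u 2 p) := by
  have e0 := hSsymm hu p (0, Pi.single 0 1) (1, 0)
  have e1 := hSsymm hu p (0, Pi.single 1 1) (1, 0)
  have e2 := hSsymm hu p (0, Pi.single 2 1) (1, 0)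
  simp only [rtDen, divjDen, HeffnosDen, Qv, Pv, Vv, dotProduct, crossProduct,
    Fin.sum_univ_three, LinearMap.mk₂_apply, Matrix.cons_val_zero, Matrix.cons_val_one,
    Matrix.head_cons, Matrix.cons_val_two, Matrix.tail_cons, Pi.add_apply, Pi.sub_apply,
    Pi.smul_apply, smul_eq_mul, unitVec, Pi.single_apply, e0, e1, e2]
  norm_num [Fin.ext_iff]
  ring

end
end LLG
namespace LLG

/-- pointwise consequence of the LLG equation -/
lemma llg_pointwise (γ α Ms : ℝ) (hγ : γ ≠ 0) (m v h : V3)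
    (hE : v = (-γ) • (m ⨯₃ h) + (α / Ms) • (m ⨯₃ v)) :
    v ⬝ᵥ h = (α/(γ*Ms)) * (v ⬝ᵥ v) := by
  have e0 := congrFun hE 0
  have e1 := congrFun hE 1
  have e2 := congrFun hE 2
  simp only [crossProduct, Pi.add_apply, Pi.smul_apply, smul_eq_mul, LinearMap.mk₂_apply,
    Matrix.cons_val_zero, Matrix.cons_val_one, Matrix.head_cons, Matrix.cons_val_two,
    Matrix.tail_cons] at e0 e1 e2
  have key : γ * (v ⬝ᵥ h) = (α/Ms) * (v ⬝ᵥ v) := by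
    simp only [dotProduct, Fin.sum_univ_three]
    linear_combination (γ * h 0 - α/Ms * v 0) * e0 + (γ * h 1 - α/Ms * v 1) * e1
      + (γ * h 2 - α/Ms * v 2) * e2
  calc v ⬝ᵥ h = (1/γ) * (γ * (v ⬝ᵥ h)) := by field_simp
  _ = (1/γ) * ((α/Ms) * (v ⬝ᵥ v)) := by rw [key]
  _ = α/(γ*Ms) * (v ⬝ᵥ v) := by ring

/-- the flux vanishes on the relevant face under the chiral BC -/
lemma gDen_bdry (A D Ms : ℝ) (hA : A ≠ 0) (u : E3 → V3) (p : E3) (j : Fin 3)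
    (hbc : Pv u j p = (-(D/(2*A))) • (u p ⨯₃ unitVec j)) :
    gDen A D Ms u j p = 0 := by
  have hb2 : ∀ i, 2*A*Pv u j p i = -D * (u p ⨯₃ unitVec j) i := by
    intro i
    rw [congrFun hbc i]
    simp only [Pi.smul_apply, smul_eq_mul]
    field_simp
  have h2A : (2*A) ≠ 0 := by simpa using hA
  suffices h : 2*A*gDen A D Ms u j p = 0 by
    rcases mul_eq_zero.mp h with h' | h'
    · exact absurd h' h2A
    · exact h'
  fin_cases j <;>
  · have e0 := hb2 0
    have e1 := hb2 1
    have e2 := hb2 2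
    simp [crossProduct, unitVec, -mul_eq_zero] at e0 e1 e2
    simp [gDen, -mul_eq_zero]
    linear_combination (2*(A/Ms^2) * Vv u p 0) * e0 + (2*(A/Ms^2) * Vv u p 1) * e1
      + (2*(A/Ms^2) * Vv u p 2) * e2

end LLG
namespace LLG
open ContinuousLinearMap

section
variable {u : E3 → V3} (hu : ContDiff ℝ 2 u)
include hu

lemma divG_int_zero (A D Ms : ℝ) (hA : A ≠ 0) (L : V3) (hle : (0:V3) ≤ L) (t : ℝ)
    (hbc : ∀ x ∈ Set.Icc (0:V3) L, ∀ j : Fin 3, (x j = L j ∨ x j = 0) →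
      Pv u j (t,x) = (-(D/(2*A))) • (u (t,x) ⨯₃ unitVec j)) :
    ∫ x in Set.Icc (0:V3) L, (divjDen A D Ms u 0 (t,x) + divjDen A D Ms u 1 (t,x)
        + divjDen A D Ms u 2 (t,x)) = 0 := by
  have hfun : (fun y => ∑ i : Fin 3,
        fderiv ℝ (fun z => gDen A D Ms u i (t,z)) y (Pi.single i 1))
      = fun y => divjDen A D Ms u 0 (t,y) + divjDen A D Ms u 1 (t,y)
        + divjDen A D Ms u 2 (t,y) := by
    funext y
    rw [Fin.sum_univ_three]
    rw [show (Pi.single (0 : Fin 3) (1:ℝ)) = unitVec 0 from rfl,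
      show (Pi.single (1 : Fin 3) (1:ℝ)) = unitVec 1 from rfl,
      show (Pi.single (2 : Fin 3) (1:ℝ)) = unitVec 2 from rfl,
      fderiv_gDen_apply hu A D Ms t y 0, fderiv_gDen_apply hu A D Ms t y 1,
      fderiv_gDen_apply hu A D Ms t y 2]
  have Hi : IntegrableOn (fun y => ∑ i : Fin 3,
      fderiv ℝ (fun z => gDen A D Ms u i (t,z)) y (Pi.single i 1)) (Set.Icc (0:V3) L) := by
    rw [hfun]
    refine ContinuousOn.integrableOn_compact isCompact_Icc (Continuous.continuousOn ?_)
    exact (((cont_divjDen hu A D Ms 0).comp (Continuous.prodMk_right t)).add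
      ((cont_divjDen hu A D Ms 1).comp (Continuous.prodMk_right t))).add
      ((cont_divjDen hu A D Ms 2).comp (Continuous.prodMk_right t))
  have key := MeasureTheory.integral_divergence_of_hasFDerivAt_off_countable'
    (a := (0:V3)) (b := L) hle
    (fun j y => gDen A D Ms u j (t,y))
    (fun j y => fderiv ℝ (fun z => gDen A D Ms u j (t,z)) y)
    ∅ Set.countable_empty
    (fun j => (cont_gDen hu A D Ms t j).continuousOn)
    (fun y _ j => (diffAt_gDen hu A D Ms t y j).hasFDerivAt)
    Hi
  rw [hfun] at key
  rw [key]
  apply Finset.sum_eq_zero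
  intro i _
  have hfront : ∀ y ∈ Set.Icc ((0:V3) ∘ i.succAbove) (L ∘ i.succAbove),
      gDen A D Ms u i (t, i.insertNth (L i) y) = 0 := by
    intro y hy
    have hmem : i.insertNth (L i) y ∈ Set.Icc (0:V3) L := by
      refine Fin.insertNth_mem_Icc.2 ⟨⟨hle i, le_rfl⟩, hy⟩
    refine gDen_bdry A D Ms hA u _ i (hbc _ hmem i (Or.inl ?_))
    simp
  have hback : ∀ y ∈ Set.Icc ((0:V3) ∘ i.succAbove) (L ∘ i.succAbove),
      gDen A D Ms u i (t, i.insertNth ((0:V3) i) y) = 0 := by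
    intro y hy
    have hmem : i.insertNth ((0:V3) i) y ∈ Set.Icc (0:V3) L := by
      refine Fin.insertNth_mem_Icc.2 ⟨⟨le_rfl, hle i⟩, hy⟩
    refine gDen_bdry A D Ms hA u _ i (hbc _ hmem i (Or.inr ?_))
    simp
  rw [MeasureTheory.setIntegral_congr_fun measurableSet_Icc hfront,
    MeasureTheory.setIntegral_congr_fun measurableSet_Icc hback]
  simp

end
end LLG
namespace LLG
open ContinuousLinearMap

section
variable {u : E3 → V3} (hu : ContDiff ℝ 2 u)
include hu

lemma hasDerivAt_int_rDen (A D Ku μ0 Ms : ℝ) (H L : V3) (t : ℝ) :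
    HasDerivAt (fun s => ∫ x in Set.Icc (0:V3) L, rDen A D Ku μ0 Ms H u (s,x))
      (∫ x in Set.Icc (0:V3) L, rtDen A D Ku μ0 Ms H u (t,x)) t := by
  have hcontr := cont_rDen hu A D Ku μ0 Ms H
  have hcontrt := cont_rtDen hu A D Ku μ0 Ms H
  obtain ⟨C, hC⟩ := IsCompact.exists_bound_of_continuousOn
    (isCompact_Icc.prod isCompact_Icc :
      IsCompact (Set.Icc (t-1) (t+1) ×ˢ Set.Icc (0:V3) L))
    hcontrt.continuousOn
  have main := hasDerivAt_integral_of_dominated_loc_of_deriv_le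
    (F := fun s x => rDen A D Ku μ0 Ms H u (s,x))
    (F' := fun s x => rtDen A D Ku μ0 Ms H u (s,x))
    (x₀ := t) (bound := fun _ => C) (s := Metric.ball t 1)
    (μ := MeasureTheory.volume.restrict (Set.Icc (0:V3) L)) (Metric.ball_mem_nhds t one_pos)
    (Filter.Eventually.of_forall fun s =>
      ((hcontr.comp (Continuous.prodMk_right s)).aestronglyMeasurable))
    (ContinuousOn.integrableOn_compact isCompact_Icc
      ((hcontr.comp (Continuous.prodMk_right t)).continuousOn))
    ((hcontrt.comp (Continuous.prodMk_right t)).aestronglyMeasurable)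
    ?_ ?_ ?_
  · exact main.2
  · filter_upwards [MeasureTheory.ae_restrict_mem measurableSet_Icc] with x hx
    intro s hs
    refine hC (s, x) ⟨?_, hx⟩
    rw [Metric.mem_ball, Real.dist_eq] at hs
    have h1 := abs_lt.mp hs
    exact Set.mem_Icc.2 ⟨by linarith [h1.1], by linarith [h1.2]⟩
  · exact MeasureTheory.integrableOn_const (IsCompact.measure_lt_top isCompact_Icc).ne
  · exact MeasureTheory.ae_of_all _ fun x s _ => hasDerivAt_rDen hu A D Ku μ0 Ms H s x

end
end LLG
namespace LLG
open ContinuousLinearMap MeasureTheory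

section
variable {u : E3 → V3} (hu : ContDiff ℝ 2 u)
include hu

lemma cont_vh (A D Ku μ0 Ms : ℝ) (H : V3) :
    Continuous fun p : E3 => Vv u p ⬝ᵥ HeffnosDen A D Ku μ0 Ms H u p := by
  have c1 := hJcont hu; have c2 := hucont hu; have c3 := hScont hu
  unfold HeffnosDen Vv Pv
  simp only [dotProduct, Fin.sum_univ_three, Pi.add_apply, Pi.sub_apply, Pi.smul_apply,
    smul_eq_mul, unitVec, Pi.single_apply, Matrix.cons_val_zero, Matrix.cons_val_one,
    Matrix.head_cons, Matrix.cons_val_two, Matrix.tail_cons]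
  norm_num [Fin.ext_iff]
  fun_prop

lemma cont_vv : Continuous fun p : E3 => Vv u p ⬝ᵥ Vv u p := by
  have c1 := hJcont hu
  unfold Vv
  simp only [dotProduct, Fin.sum_univ_three]
  fun_prop

lemma cont_vhs (Hs : ℝ → V3 → V3) (hHsC : Continuous fun p : E3 => Hs p.1 p.2) :
    Continuous fun p : E3 => Vv u p ⬝ᵥ Hs p.1 p.2 := by
  have c1 := hJcont hu
  unfold Vv
  simp only [dotProduct, Fin.sum_univ_three]
  have hHsi : ∀ i : Fin 3, Continuous fun p : E3 => Hs p.1 p.2 i :=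
    fun i => (continuous_apply i).comp hHsC
  have h0 := hHsi 0; have h1 := hHsi 1; have h2 := hHsi 2
  fun_prop

/-- Master derivative computation. -/
lemma master (A D Ku μ0 Ms γ α : ℝ) (hA : A ≠ 0) (hγ : γ ≠ 0)
    (H L : V3) (hle : (0:V3) ≤ L) (Hs : ℝ → V3 → V3)
    (hHsC : Continuous fun p : E3 => Hs p.1 p.2) (t : ℝ)
    (hK : HasDerivAt (fun s => ∫ x in Set.Icc (0:V3) L, (u (s,x) ⬝ᵥ Hs s x))
      (2 * ∫ x in Set.Icc (0:V3) L, (Vv u (t,x) ⬝ᵥ Hs t x)) t)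
    (hLLGt : ∀ x ∈ Set.Icc (0:V3) L,
      Vv u (t,x) = (-γ) • (u (t,x) ⨯₃ (HeffnosDen A D Ku μ0 Ms H u (t,x) + μ0 • Hs t x))
        + (α/Ms) • (u (t,x) ⨯₃ Vv u (t,x)))
    (hbc : ∀ x ∈ Set.Icc (0:V3) L, ∀ j : Fin 3, (x j = L j ∨ x j = 0) →
      Pv u j (t,x) = (-(D/(2*A))) • (u (t,x) ⨯₃ unitVec j)) :
    HasDerivAt (fun s => (∫ x in Set.Icc (0:V3) L, rDen A D Ku μ0 Ms H u (s,x))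
        - (μ0/2) * ∫ x in Set.Icc (0:V3) L, (u (s,x) ⬝ᵥ Hs s x))
      (-(α/(γ*Ms)) * ∫ x in Set.Icc (0:V3) L, (Vv u (t,x) ⬝ᵥ Vv u (t,x))) t := by
  have h1 := (hasDerivAt_int_rDen hu A D Ku μ0 Ms H L t).sub (hK.const_mul (μ0/2))
  -- integrability facts
  have intVH : IntegrableOn
      (fun x => Vv u (t,x) ⬝ᵥ HeffnosDen A D Ku μ0 Ms H u (t,x)) (Set.Icc (0:V3) L) :=
    ContinuousOn.integrableOn_compact isCompact_Icc
      (((cont_vh hu A D Ku μ0 Ms H).comp (Continuous.prodMk_right t)).continuousOn)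
  have intdiv : IntegrableOn (fun x => divjDen A D Ms u 0 (t,x) + divjDen A D Ms u 1 (t,x)
      + divjDen A D Ms u 2 (t,x)) (Set.Icc (0:V3) L) :=
    ContinuousOn.integrableOn_compact isCompact_Icc
      ((Continuous.continuousOn (by
        exact (((cont_divjDen hu A D Ms 0).comp (Continuous.prodMk_right t)).add
          ((cont_divjDen hu A D Ms 1).comp (Continuous.prodMk_right t))).add
          ((cont_divjDen hu A D Ms 2).comp (Continuous.prodMk_right t)))))
  have intVHneg : IntegrableOn
      (fun x => -(Vv u (t,x) ⬝ᵥ HeffnosDen A D Ku μ0 Ms H u (t,x))) (Set.Icc (0:V3) L) :=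
    intVH.neg
  have intVHs : IntegrableOn (fun x => Vv u (t,x) ⬝ᵥ Hs t x) (Set.Icc (0:V3) L) :=
    ContinuousOn.integrableOn_compact isCompact_Icc
      (((cont_vhs hu Hs hHsC).comp (Continuous.prodMk_right t)).continuousOn)
  -- step 1 : ∫ rtDen = ∫ -(v⬝Heffnos)
  have step1 : (∫ x in Set.Icc (0:V3) L, rtDen A D Ku μ0 Ms H u (t,x))
      = ∫ x in Set.Icc (0:V3) L, -(Vv u (t,x) ⬝ᵥ HeffnosDen A D Ku μ0 Ms H u (t,x)) := by
    rw [setIntegral_congr_fun measurableSet_Icc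
      (fun x _ => key_rtDen hu A D Ku μ0 Ms H (t,x))]
    rw [integral_add intVHneg intdiv, divG_int_zero hu A D Ms hA L hle t hbc, add_zero]
  -- step 2 : combine with stray field part
  have step2 : (∫ x in Set.Icc (0:V3) L, -(Vv u (t,x) ⬝ᵥ HeffnosDen A D Ku μ0 Ms H u (t,x)))
      - μ0 * ∫ x in Set.Icc (0:V3) L, (Vv u (t,x) ⬝ᵥ Hs t x)
      = ∫ x in Set.Icc (0:V3) L, (-(Vv u (t,x) ⬝ᵥ HeffnosDen A D Ku μ0 Ms H u (t,x))
          - μ0 * (Vv u (t,x) ⬝ᵥ Hs t x)) := by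
    have intVHsmul : IntegrableOn (fun x => μ0 * (Vv u (t,x) ⬝ᵥ Hs t x)) (Set.Icc (0:V3) L) :=
      intVHs.const_mul μ0
    rw [← integral_const_mul, ← integral_sub intVHneg intVHsmul]
  -- step 3 : use LLG pointwise
  have step3 : (∫ x in Set.Icc (0:V3) L, (-(Vv u (t,x) ⬝ᵥ HeffnosDen A D Ku μ0 Ms H u (t,x))
        - μ0 * (Vv u (t,x) ⬝ᵥ Hs t x)))
      = ∫ x in Set.Icc (0:V3) L, (-(α/(γ*Ms)) * (Vv u (t,x) ⬝ᵥ Vv u (t,x))) := by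
    refine setIntegral_congr_fun measurableSet_Icc (fun x hx => ?_)
    have hdot := llg_pointwise γ α Ms hγ (u (t,x)) (Vv u (t,x))
      (HeffnosDen A D Ku μ0 Ms H u (t,x) + μ0 • Hs t x) (hLLGt x hx)
    rw [dotProduct_add, dotProduct_smul, smul_eq_mul] at hdot
    linarith
  have step4 : (∫ x in Set.Icc (0:V3) L, (-(α/(γ*Ms)) * (Vv u (t,x) ⬝ᵥ Vv u (t,x))))
      = -(α/(γ*Ms)) * ∫ x in Set.Icc (0:V3) L, (Vv u (t,x) ⬝ᵥ Vv u (t,x)) := by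
    rw [integral_const_mul]
  refine h1.congr_deriv ?_
  rw [step1]
  rw [show (∫ x in Set.Icc (0:V3) L, -(Vv u (t,x) ⬝ᵥ HeffnosDen A D Ku μ0 Ms H u (t,x)))
      - μ0/2 * (2 * ∫ x in Set.Icc (0:V3) L, (Vv u (t,x) ⬝ᵥ Hs t x))
    = (∫ x in Set.Icc (0:V3) L, -(Vv u (t,x) ⬝ᵥ HeffnosDen A D Ku μ0 Ms H u (t,x)))
      - μ0 * ∫ x in Set.Icc (0:V3) L, (Vv u (t,x) ⬝ᵥ Hs t x) from by ring]
  rw [step2, step3, step4]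

end
end LLG

/-- uncurried version of `M` -/
def uof (M : ℝ → V3 → V3) : LLG.E3 → V3 := fun p => M p.1 p.2

/-- **Energy dissipation law for the LLG equation with DMI.**
If `M` solves the LLG equation `∂M/∂t = −γ M × 𝓗 + (α/Ms) M × ∂M/∂t` on `[0,T] × Ω`
with the chiral boundary condition `∂M/∂ν = −(D/(2A)) M × ν` on `[0,T] × ∂Ω`, the applied
field `H` is constant in time, and the stray field `Hs` satisfies the reciprocity relation,
then for all `t ∈ (0,T)` the free energy `t ↦ F[M(t,·)]` has derivative
`−(α/(γMs)) ∫_Ω |∂M/∂t|² dx ≤ 0`; in particular it is nonincreasing on `[0,T]`. -/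
theorem llg_energy_dissipation (T A D Ku μ0 Ms γ α : ℝ) (L : V3)
    (hT : 0 < T) (hA : 0 < A) (hKu : 0 ≤ Ku) (hμ0 : 0 < μ0) (hMs : 0 < Ms)
    (hγ : 0 < γ) (hα : 0 ≤ α) (hL : ∀ i, 0 < L i)
    (H : V3) (M Hs : ℝ → V3 → V3)
    (hM : ContDiff ℝ 2 (fun p : ℝ × V3 => M p.1 p.2))
    (hHsCont : Continuous (fun p : ℝ × V3 => Hs p.1 p.2))
    (hHsDiff : ∀ x : V3, Differentiable ℝ (fun t => Hs t x))
    (hRecip : ∀ t : ℝ,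
      HasDerivAt (fun s => ∫ x in Set.Icc (0:V3) L, (M s x) ⬝ᵥ (Hs s x))
        (2 * ∫ x in Set.Icc (0:V3) L, (deriv (fun s => M s x) t) ⬝ᵥ (Hs t x)) t)
    (hLLG : ∀ t ∈ Set.Icc (0:ℝ) T, ∀ x ∈ Set.Icc (0:V3) L,
      deriv (fun s => M s x) t
        = (-γ) • ((M t x) ⨯₃ (Heff A D Ku μ0 Ms H (Hs t) (M t) x))
          + (α / Ms) • ((M t x) ⨯₃ (deriv (fun s => M s x) t)))
    (hBC : ∀ t ∈ Set.Icc (0:ℝ) T, chiralBC L (D / (2*A)) (M t)) :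
    (∀ t ∈ Set.Ioo (0:ℝ) T,
      HasDerivAt (fun s => Fenergy A D Ku μ0 Ms H L (Hs s) (M s))
        (-(α/(γ*Ms)) * ∫ x in Set.Icc (0:V3) L,
            (deriv (fun s => M s x) t) ⬝ᵥ (deriv (fun s => M s x) t)) t
      ∧ -(α/(γ*Ms)) * (∫ x in Set.Icc (0:V3) L,
            (deriv (fun s => M s x) t) ⬝ᵥ (deriv (fun s => M s x) t)) ≤ 0)
    ∧ AntitoneOn (fun t => Fenergy A D Ku μ0 Ms H L (Hs t) (M t)) (Set.Icc (0:ℝ) T) := by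

  classical
  have hu : ContDiff ℝ 2 (uof M) := hM
  have hle : (0:V3) ≤ L := fun i => (hL i).le
  have hder : ∀ (x : V3) (t' : ℝ), deriv (fun s => M s x) t' = LLG.Vv (uof M) (t', x) :=
    fun x t' => LLG.deriv_time hu t' x
  have hHeffEq : ∀ (t' : ℝ) (x : V3), Heff A D Ku μ0 Ms H (Hs t') (M t') x
      = LLG.HeffnosDen A D Ku μ0 Ms H (uof M) (t', x) + μ0 • Hs t' x :=
    fun t' x => LLG.Heff_eq hu A D Ku μ0 Ms H t' x (Hs t')
  have hPveq : ∀ (t' : ℝ) (x : V3) (j : Fin 3),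
      LLG.Pv (uof M) j (t', x) = fderiv ℝ (M t') x (unitVec j) :=
    fun t' x j => (LLG.pder_eq hu t' x j).symm
  have hrd : ∀ (s : ℝ) (x : V3),
      (A/Ms^2) * gradSq (M s) x + (D/Ms^2) * ((curl3 (M s) x) ⬝ᵥ (M s x))
        - μ0 * (H ⬝ᵥ (M s x)) - (μ0/2) * ((Hs s x) ⬝ᵥ (M s x))
        + (Ku/Ms^2) * ((M s x 1)^2 + (M s x 2)^2)
      = LLG.rDen A D Ku μ0 Ms H (uof M) (s, x) - (μ0/2) * ((M s x) ⬝ᵥ (Hs s x)) := by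
    intro s x
    have h := LLG.rDen_eq hu A D Ku μ0 Ms H s x (Hs s)
    rw [dotProduct_comm (M s x) (Hs s x)]
    exact h
  have intHsM : ∀ s, MeasureTheory.IntegrableOn (fun x => (M s x) ⬝ᵥ (Hs s x))
      (Set.Icc (0:V3) L) := by
    intro s
    refine ContinuousOn.integrableOn_compact isCompact_Icc (Continuous.continuousOn ?_)
    have hMc : Continuous fun x => M s x := hu.continuous.comp (Continuous.prodMk_right s)
    have hHsc : Continuous fun x => Hs s x := hHsCont.comp (Continuous.prodMk_right s)
    simp only [dotProduct, Fin.sum_univ_three]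
    fun_prop
  have intrd : ∀ s, MeasureTheory.IntegrableOn
      (fun x => LLG.rDen A D Ku μ0 Ms H (uof M) (s,x)) (Set.Icc (0:V3) L) :=
    fun s => ContinuousOn.integrableOn_compact isCompact_Icc
      (((LLG.cont_rDen hu A D Ku μ0 Ms H).comp (Continuous.prodMk_right s)).continuousOn)
  have hFsplit : ∀ s, Fenergy A D Ku μ0 Ms H L (Hs s) (M s)
      = (∫ x in Set.Icc (0:V3) L, LLG.rDen A D Ku μ0 Ms H (uof M) (s,x))
        - (μ0/2) * ∫ x in Set.Icc (0:V3) L, ((M s x) ⬝ᵥ (Hs s x)) := by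
    intro s
    unfold Fenergy
    rw [MeasureTheory.setIntegral_congr_fun measurableSet_Icc (fun x _ => hrd s x)]
    rw [MeasureTheory.integral_sub (intrd s) ((intHsM s).const_mul (μ0/2))]
    rw [MeasureTheory.integral_const_mul]
  have hDall : ∀ t : ℝ, HasDerivAt (fun s => Fenergy A D Ku μ0 Ms H L (Hs s) (M s))
      ((∫ x in Set.Icc (0:V3) L, LLG.rtDen A D Ku μ0 Ms H (uof M) (t,x))
        - μ0/2 * (2 * ∫ x in Set.Icc (0:V3) L,
            (deriv (fun s => M s x) t) ⬝ᵥ (Hs t x))) t := by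
    intro t
    have h1 := (LLG.hasDerivAt_int_rDen hu A D Ku μ0 Ms H L t).sub
      ((hRecip t).const_mul (μ0/2))
    simp only [hFsplit]
    exact h1
  have part1 : ∀ t ∈ Set.Ioo (0:ℝ) T,
      HasDerivAt (fun s => Fenergy A D Ku μ0 Ms H L (Hs s) (M s))
        (-(α/(γ*Ms)) * ∫ x in Set.Icc (0:V3) L,
            (deriv (fun s => M s x) t) ⬝ᵥ (deriv (fun s => M s x) t)) t := by
    intro t ht
    have htIcc : t ∈ Set.Icc (0:ℝ) T := ⟨ht.1.le, ht.2.le⟩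
    have hdd : (∫ x in Set.Icc (0:V3) L, (deriv (fun s => M s x) t) ⬝ᵥ (Hs t x))
        = ∫ x in Set.Icc (0:V3) L, (LLG.Vv (uof M) (t,x) ⬝ᵥ Hs t x) := by
      simp only [hder]
    have hK : HasDerivAt (fun s => ∫ x in Set.Icc (0:V3) L, ((uof M) (s,x) ⬝ᵥ Hs s x))
        (2 * ∫ x in Set.Icc (0:V3) L, (LLG.Vv (uof M) (t,x) ⬝ᵥ Hs t x)) t := by
      have h := hRecip t
      rw [hdd] at h
      exact h
    have hLLGt : ∀ x ∈ Set.Icc (0:V3) L,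
        LLG.Vv (uof M) (t,x) = (-γ) • ((uof M) (t,x) ⨯₃
            (LLG.HeffnosDen A D Ku μ0 Ms H (uof M) (t,x) + μ0 • Hs t x))
          + (α/Ms) • ((uof M) (t,x) ⨯₃ LLG.Vv (uof M) (t,x)) := by
      intro x hx
      have h := hLLG t htIcc x hx
      rw [hder x t, hHeffEq t x] at h
      exact h
    have hbc : ∀ x ∈ Set.Icc (0:V3) L, ∀ j : Fin 3, (x j = L j ∨ x j = 0) →
        LLG.Pv (uof M) j (t,x) = (-(D/(2*A))) • ((uof M) (t,x) ⨯₃ unitVec j) := by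
      intro x hx j hj
      have hB := hBC t htIcc x hx j
      rcases hj with hj | hj
      · rw [hPveq t x j]
        exact hB.1 hj
      · have h2 := hB.2 hj
        rw [map_neg, map_neg, smul_neg, neg_inj] at h2
        rw [hPveq t x j]
        exact h2
    have hmain := LLG.master hu A D Ku μ0 Ms γ α hA.ne' hγ.ne' H L hle Hs hHsCont t
      hK hLLGt hbc
    simp only [hFsplit]
    have hdd2 : (∫ x in Set.Icc (0:V3) L,
          (deriv (fun s => M s x) t) ⬝ᵥ (deriv (fun s => M s x) t))
        = ∫ x in Set.Icc (0:V3) L, (LLG.Vv (uof M) (t,x) ⬝ᵥ LLG.Vv (uof M) (t,x)) := by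
      simp only [hder]
    rw [hdd2]
    exact hmain
  have hnonneg : ∀ t : ℝ, 0 ≤ ∫ x in Set.Icc (0:V3) L,
      (deriv (fun s => M s x) t) ⬝ᵥ (deriv (fun s => M s x) t) := by
    intro t
    refine MeasureTheory.setIntegral_nonneg measurableSet_Icc (fun x _ => ?_)
    exact Finset.sum_nonneg fun i _ => mul_self_nonneg _
  have hfac : 0 ≤ α/(γ*Ms) := div_nonneg hα (mul_pos hγ hMs).le
  have hval : ∀ t : ℝ, -(α/(γ*Ms)) * (∫ x in Set.Icc (0:V3) L,
      (deriv (fun s => M s x) t) ⬝ᵥ (deriv (fun s => M s x) t)) ≤ 0 := by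
    intro t
    have := mul_nonneg hfac (hnonneg t)
    linarith
  constructor
  · intro t ht
    exact ⟨part1 t ht, hval t⟩
  · refine antitoneOn_of_deriv_nonpos (convex_Icc 0 T) ?_ ?_ ?_
    · exact (continuous_iff_continuousAt.2 fun t => (hDall t).continuousAt).continuousOn
    · intro t ht
      rw [interior_Icc] at ht
      exact (hDall t).differentiableAt.differentiableWithinAt
    · intro t ht
      rw [interior_Icc] at ht
      rw [(part1 t ht).deriv]
      exact hval t

end
end

section
/- Energy derivative identity under the chiral boundary condition: Let M : [0,T]×Ω → ℝ³ be continuously differentiable in time and twice continuously differentiable in space (with continuous mixed time–space derivatives), satisfying the chiral boundary condition ∂M/∂ν = −(D/(2A)) M × ν on [0,T]×∂Ω. Assume the applied field H ∈ ℝ³ is constant in time and the stray field H_s satisfies the reciprocity relation. Then for all t ∈ (0,T), d/dt F[M(t,·)] = −∫_Ω (∂M/∂t) · 𝓗 dx, i.e. all boundary contributions produced by the exchange and DMI terms cancel exactly under the chiral boundary condition. -/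
open MeasureTheory Matrix

noncomputable section

namespace EDI

lemma hasFDerivAt_slice {F : Type*} [NormedAddCommGroup F] [NormedSpace ℝ F]
    (g : ℝ × V3 → F) (hg : Differentiable ℝ g) (s : ℝ) (x : V3) :
    HasFDerivAt (fun y => g (s, y))
      ((fderiv ℝ g (s, x)).comp (ContinuousLinearMap.inr ℝ ℝ V3)) x :=
  (hg (s, x)).hasFDerivAt.comp x ((hasFDerivAt_const s x).prodMk (hasFDerivAt_id x))

lemma hasDerivAt_time {F : Type*} [NormedAddCommGroup F] [NormedSpace ℝ F]
    (g : ℝ × V3 → F) (hg : Differentiable ℝ g) (t : ℝ) (x : V3) :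
    HasDerivAt (fun s => g (s, x)) (fderiv ℝ g (t, x) ((1:ℝ), (0:V3))) t := by
  have h1 : HasDerivAt (fun s : ℝ => (s, x)) ((1:ℝ), (0:V3)) t := by
    simpa using ((hasDerivAt_id t).prodMk (hasDerivAt_const t x))
  exact (hg (t, x)).hasFDerivAt.comp_hasDerivAt t h1

/-- differentiation under the integral over the box -/
lemma hasDerivAt_setIntegral_Icc (L : V3) (φ φ' : ℝ × V3 → ℝ)
    (hφ : Continuous φ) (hφ' : Continuous φ')
    (hd : ∀ (s : ℝ) (x : V3), HasDerivAt (fun u => φ (u, x)) (φ' (s, x)) s) (t : ℝ) :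
    HasDerivAt (fun s => ∫ x in Set.Icc (0:V3) L, φ (s, x))
      (∫ x in Set.Icc (0:V3) L, φ' (t, x)) t := by
  have hKc : IsCompact (Set.Icc (t-1) (t+1) ×ˢ Set.Icc (0:V3) L) :=
    isCompact_Icc.prod isCompact_Icc
  obtain ⟨C, hC⟩ := hKc.exists_bound_of_continuousOn hφ'.continuousOn
  have hball : ∀ s ∈ Metric.ball t 1, s ∈ Set.Icc (t-1) (t+1) := by
    intro s hs
    rw [Real.ball_eq_Ioo] at hs
    exact ⟨hs.1.le, hs.2.le⟩
  refine (hasDerivAt_integral_of_dominated_loc_of_deriv_le (Metric.ball_mem_nhds t one_pos)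
    (F := fun s x => φ (s, x)) (F' := fun s x => φ' (s, x)) (bound := fun _ => C)
    ?_ ?_ ?_ ?_ ?_ ?_).2
  · exact Filter.Eventually.of_forall fun s =>
      ((hφ.comp (continuous_const.prodMk continuous_id)).aestronglyMeasurable).restrict
  · exact (hφ.comp (continuous_const.prodMk continuous_id)).continuousOn.integrableOn_compact
      isCompact_Icc
  · exact ((hφ'.comp (continuous_const.prodMk continuous_id)).aestronglyMeasurable).restrict
  · refine (ae_restrict_iff' measurableSet_Icc).2 (Filter.Eventually.of_forall ?_)
    intro x hx s hs
    exact hC (s, x) ⟨hball s hs, hx⟩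
  · exact integrableOn_const isCompact_Icc.measure_lt_top.ne
  · exact (ae_restrict_iff' measurableSet_Icc).2 (Filter.Eventually.of_forall
      fun x _ s _ => hd s x)

variable (f : ℝ × V3 → V3)

lemma hf_diff (hf : ContDiff ℝ 2 f) : Differentiable ℝ f := hf.differentiable (by norm_num)
lemma hFd_C1 (hf : ContDiff ℝ 2 f) : ContDiff ℝ 1 (fderiv ℝ f) := hf.fderiv_right (by norm_num)
lemma hFd_diff (hf : ContDiff ℝ 2 f) : Differentiable ℝ (fderiv ℝ f) :=
  (hFd_C1 f hf).differentiable (by norm_num)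

lemma hasDerivAt_time_Fd (hf : ContDiff ℝ 2 f) (t : ℝ) (x : V3) (w : ℝ × V3) :
    HasDerivAt (fun s => fderiv ℝ f (s, x) w)
      (fderiv ℝ (fderiv ℝ f) (t, x) ((1:ℝ), (0:V3)) w) t := by
  have h := hasDerivAt_time (fderiv ℝ f) (hFd_diff f hf) t x
  exact h.clm_apply (hasDerivAt_const t w) |>.congr_deriv (by simp)

lemma symm_snd (hf : ContDiff ℝ 2 f) (t : ℝ) (x : V3) (v w : ℝ × V3) :
    fderiv ℝ (fderiv ℝ f) (t, x) v w = fderiv ℝ (fderiv ℝ f) (t, x) w v :=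
  (hf.contDiffAt.isSymmSndFDerivAt (by simp)).eq v w

def pv (p : ℝ × V3) (j : Fin 3) : V3 := fderiv ℝ f p (0, unitVec j)
def nv (p : ℝ × V3) : V3 := fderiv ℝ f p (1, 0)
def qv (p : ℝ × V3) (j : Fin 3) : V3 := fderiv ℝ (fderiv ℝ f) p (0, unitVec j) (1, 0)
def sv (p : ℝ × V3) (j : Fin 3) : V3 := fderiv ℝ (fderiv ℝ f) p (0, unitVec j) (0, unitVec j)

lemma hasFDerivAt_space_Fd (hf : ContDiff ℝ 2 f) (t : ℝ) (x : V3) (w : ℝ × V3) :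
    HasFDerivAt (fun y => fderiv ℝ f (t, y) w)
      ((ContinuousLinearMap.apply ℝ V3 w).comp
        ((fderiv ℝ (fderiv ℝ f) (t, x)).comp (ContinuousLinearMap.inr ℝ ℝ V3))) x :=
  (ContinuousLinearMap.apply ℝ V3 w).hasFDerivAt.comp x
    (hasFDerivAt_slice (fderiv ℝ f) (hFd_diff f hf) t x)

lemma hasF_m (hf : ContDiff ℝ 2 f) (t : ℝ) (x : V3) (i : Fin 3) :
    HasFDerivAt (fun y => f (t, y) i)
      ((ContinuousLinearMap.proj i).comp
        ((fderiv ℝ f (t, x)).comp (ContinuousLinearMap.inr ℝ ℝ V3))) x := by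
  have h := (ContinuousLinearMap.proj (R := ℝ) (φ := fun _ : Fin 3 => ℝ) i).hasFDerivAt.comp x
    (hasFDerivAt_slice f (hf_diff f hf) t x)
  exact h

lemma hasF_n (hf : ContDiff ℝ 2 f) (t : ℝ) (x : V3) (i : Fin 3) :
    HasFDerivAt (fun y => nv f (t, y) i)
      ((ContinuousLinearMap.proj i).comp
        ((ContinuousLinearMap.apply ℝ V3 ((1:ℝ), (0:V3))).comp
          ((fderiv ℝ (fderiv ℝ f) (t, x)).comp (ContinuousLinearMap.inr ℝ ℝ V3)))) x := by
  have h := (ContinuousLinearMap.proj (R := ℝ) (φ := fun _ : Fin 3 => ℝ) i).hasFDerivAt.comp x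
    (hasFDerivAt_space_Fd f hf t x ((1:ℝ), (0:V3)))
  exact h

lemma hasF_p (hf : ContDiff ℝ 2 f) (t : ℝ) (x : V3) (j i : Fin 3) :
    HasFDerivAt (fun y => pv f (t, y) j i)
      ((ContinuousLinearMap.proj i).comp
        ((ContinuousLinearMap.apply ℝ V3 ((0:ℝ), unitVec j)).comp
          ((fderiv ℝ (fderiv ℝ f) (t, x)).comp (ContinuousLinearMap.inr ℝ ℝ V3)))) x := by
  have h := (ContinuousLinearMap.proj (R := ℝ) (φ := fun _ : Fin 3 => ℝ) i).hasFDerivAt.comp x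
    (hasFDerivAt_space_Fd f hf t x ((0:ℝ), unitVec j))
  exact h

def G0 (H : V3) (c1 c2 c3 μ0 : ℝ) (p : ℝ × V3) : ℝ :=
  c1 * (∑ i : Fin 3, ∑ j : Fin 3, (pv f p j i)^2)
  + c2 * ((pv f p 1 2 - pv f p 2 1) * f p 0 + (pv f p 2 0 - pv f p 0 2) * f p 1
      + (pv f p 0 1 - pv f p 1 0) * f p 2)
  - μ0 * (H 0 * f p 0 + H 1 * f p 1 + H 2 * f p 2)
  + c3 * ((f p 1)^2 + (f p 2)^2)

def G0' (H : V3) (c1 c2 c3 μ0 : ℝ) (p : ℝ × V3) : ℝ :=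
  c1 * (∑ i : Fin 3, ∑ j : Fin 3, 2 * pv f p j i * qv f p j i)
  + c2 * (((qv f p 1 2 - qv f p 2 1) * f p 0 + (pv f p 1 2 - pv f p 2 1) * nv f p 0)
      + ((qv f p 2 0 - qv f p 0 2) * f p 1 + (pv f p 2 0 - pv f p 0 2) * nv f p 1)
      + ((qv f p 0 1 - qv f p 1 0) * f p 2 + (pv f p 0 1 - pv f p 1 0) * nv f p 2))
  - μ0 * (H 0 * nv f p 0 + H 1 * nv f p 1 + H 2 * nv f p 2)
  + c3 * (2 * f p 1 * nv f p 1 + 2 * f p 2 * nv f p 2)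

lemma hm_deriv (hf : ContDiff ℝ 2 f) (t : ℝ) (x : V3) (i : Fin 3) :
    HasDerivAt (fun s => f (s, x) i) (nv f (t, x) i) t :=
  hasDerivAt_pi.1 (hasDerivAt_time f (hf_diff f hf) t x) i

lemma hp_deriv (hf : ContDiff ℝ 2 f) (t : ℝ) (x : V3) (j i : Fin 3) :
    HasDerivAt (fun s => pv f (s, x) j i) (qv f (t, x) j i) t := by
  have h := hasDerivAt_pi.1 (hasDerivAt_time_Fd f hf t x (0, unitVec j)) i
  have e := congrFun (symm_snd f hf t x (1, 0) (0, unitVec j)) i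
  exact h.congr_deriv e

lemma hasDerivAt_G0 (hf : ContDiff ℝ 2 f) (H : V3) (c1 c2 c3 μ0 : ℝ) (t : ℝ) (x : V3) :
    HasDerivAt (fun s => G0 f H c1 c2 c3 μ0 (s, x)) (G0' f H c1 c2 c3 μ0 (t, x)) t := by
  have hm := hm_deriv f hf t x
  have hp := hp_deriv f hf t x
  have h1 : HasDerivAt (fun s => ∑ i : Fin 3, ∑ j : Fin 3, (pv f (s, x) j i)^2)
      (∑ i : Fin 3, ∑ j : Fin 3, 2 * pv f (t, x) j i * qv f (t, x) j i) t := by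
    refine HasDerivAt.fun_sum fun i _ => HasDerivAt.fun_sum fun j _ => ?_
    simpa using (hp j i).fun_pow 2
  have h2 := ((((hp 1 2).fun_sub (hp 2 1)).fun_mul (hm 0)).fun_add
      (((hp 2 0).fun_sub (hp 0 2)).fun_mul (hm 1))).fun_add
      (((hp 0 1).fun_sub (hp 1 0)).fun_mul (hm 2))
  have h3 := (((hm 0).const_mul (H 0)).fun_add ((hm 1).const_mul (H 1))).fun_add
      ((hm 2).const_mul (H 2))
  have h4 : HasDerivAt (fun s => (f (s, x) 1)^2 + (f (s, x) 2)^2)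
      (2 * f (t, x) 1 * nv f (t, x) 1 + 2 * f (t, x) 2 * nv f (t, x) 2) t := by
    have := ((hm 1).fun_pow 2).fun_add ((hm 2).fun_pow 2)
    simpa using this
  have := (((h1.const_mul c1).add (h2.const_mul c2)).sub (h3.const_mul μ0)).add
      (h4.const_mul c3)
  refine this.congr_deriv ?_
  unfold G0'
  ring

/-- the auxiliary vector field used for integration by parts -/
def wf (c1 c2 : ℝ) (t : ℝ) (j : Fin 3) (y : V3) : ℝ :=
  2*c1 * (∑ i : Fin 3, nv f (t, y) i * pv f (t, y) j i)
    - c2 * ((f (t, y)) ⨯₃ (nv f (t, y))) j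

def divExp (c1 c2 : ℝ) (t : ℝ) (x : V3) : ℝ :=
  ∑ j : Fin 3, (2*c1 * (∑ i : Fin 3,
      (nv f (t, x) i * sv f (t, x) j i + pv f (t, x) j i * qv f (t, x) j i))
    - c2 * (((f (t, x)) ⨯₃ (qv f (t, x) j)) j + ((pv f (t, x) j) ⨯₃ (nv f (t, x))) j))

lemma hw_core (hf : ContDiff ℝ 2 f) (c1 c2 : ℝ) (t : ℝ) (j i1 i2 i3 i4 : Fin 3)
    (hj : ∀ (a b : V3), (a ⨯₃ b) j = a i1 * b i2 - a i3 * b i4) (x : V3) :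
    DifferentiableAt ℝ (wf f c1 c2 t j) x ∧
      fderiv ℝ (wf f c1 c2 t j) x (unitVec j) =
        2*c1 * (∑ i : Fin 3,
            (nv f (t, x) i * sv f (t, x) j i + pv f (t, x) j i * qv f (t, x) j i))
          - c2 * (((f (t, x)) ⨯₃ (qv f (t, x) j)) j + ((pv f (t, x) j) ⨯₃ (nv f (t, x))) j) := by
  have hm := hasF_m f hf t x
  have hn := hasF_n f hf t x
  have hp := hasF_p f hf t x
  have hbase : HasFDerivAt (fun y => 2*c1 * (∑ i : Fin 3, nv f (t, y) i * pv f (t, y) j i))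
      ((2*c1) • (∑ i : Fin 3, (nv f (t, x) i • ((ContinuousLinearMap.proj i).comp
        ((ContinuousLinearMap.apply ℝ V3 ((0:ℝ), unitVec j)).comp
          ((fderiv ℝ (fderiv ℝ f) (t, x)).comp (ContinuousLinearMap.inr ℝ ℝ V3))))
        + pv f (t, x) j i • ((ContinuousLinearMap.proj i).comp
        ((ContinuousLinearMap.apply ℝ V3 ((1:ℝ), (0:V3))).comp
          ((fderiv ℝ (fderiv ℝ f) (t, x)).comp (ContinuousLinearMap.inr ℝ ℝ V3))))))) x :=
    (HasFDerivAt.fun_sum (fun i _ => (hn i).mul (hp j i))).const_mul (2*c1)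
  have hcross : HasFDerivAt
      (fun y : V3 => f (t,y) i1 * nv f (t,y) i2 - f (t,y) i3 * nv f (t,y) i4) _ x :=
    ((hm i1).mul (hn i2)).sub ((hm i3).mul (hn i4))
  have hc := hbase.fun_sub (hcross.const_mul c2)
  have ew : wf f c1 c2 t j = (fun y : V3 => 2*c1 * (∑ i : Fin 3, nv f (t, y) i * pv f (t, y) j i)
      - c2 * (f (t,y) i1 * nv f (t,y) i2 - f (t,y) i3 * nv f (t,y) i4)) :=
    funext fun y => by rw [wf, hj]
  rw [ew, hj, hj]
  refine ⟨hc.differentiableAt, ?_⟩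
  rw [hc.fderiv]
  simp only [ContinuousLinearMap.sub_apply, ContinuousLinearMap.add_apply,
    ContinuousLinearMap.smul_apply, ContinuousLinearMap.coe_comp', Function.comp_apply,
    ContinuousLinearMap.inr_apply, ContinuousLinearMap.apply_apply,
    ContinuousLinearMap.proj_apply, ContinuousLinearMap.coe_smul',
    Pi.smul_apply, ContinuousLinearMap.sum_apply, smul_eq_mul, Finset.sum_apply]
  simp only [pv, nv, qv, sv]
  congr 1
  ring

lemma hw (hf : ContDiff ℝ 2 f) (c1 c2 : ℝ) (t : ℝ) (j : Fin 3) (x : V3) :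
    DifferentiableAt ℝ (wf f c1 c2 t j) x ∧
      fderiv ℝ (wf f c1 c2 t j) x (unitVec j) =
        2*c1 * (∑ i : Fin 3,
            (nv f (t, x) i * sv f (t, x) j i + pv f (t, x) j i * qv f (t, x) j i))
          - c2 * (((f (t, x)) ⨯₃ (qv f (t, x) j)) j + ((pv f (t, x) j) ⨯₃ (nv f (t, x))) j) := by
  fin_cases j
  · exact hw_core f hf c1 c2 t 0 1 2 2 1 (fun a b => rfl) x
  · exact hw_core f hf c1 c2 t 1 2 0 0 2 (fun a b => rfl) x
  · exact hw_core f hf c1 c2 t 2 0 1 1 0 (fun a b => rfl) x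

lemma cross_dot_single (m n : V3) (j : Fin 3) :
    ∑ i : Fin 3, n i * ((m ⨯₃ unitVec j) i) = -((m ⨯₃ n) j) := by
  fin_cases j <;>
    simp [cross_apply, unitVec, Fin.sum_univ_three, Pi.single_apply] <;> ring

lemma wf_face_zero (A D Ms : ℝ) (hA : A ≠ 0) (hMs : Ms ≠ 0) (t : ℝ) (x : V3) (j : Fin 3)
    (hbc : pv f (t, x) j = (-(D/(2*A))) • ((f (t, x)) ⨯₃ (unitVec j))) :
    wf f (A/Ms^2) (D/Ms^2) t j x = 0 := by
  rw [wf]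
  have h2 : (∑ i : Fin 3, nv f (t, x) i * pv f (t, x) j i)
      = (-(D/(2*A))) * ∑ i : Fin 3, nv f (t, x) i * ((f (t, x) ⨯₃ unitVec j) i) := by
    rw [Finset.mul_sum]
    refine Finset.sum_congr rfl (fun i _ => ?_)
    rw [hbc]
    simp only [Pi.smul_apply, smul_eq_mul]
    ring
  rw [h2, cross_dot_single]
  field_simp
  ring

lemma cont_cross_apply {a b : V3 → V3} (ha : ∀ i, Continuous fun y => a y i)
    (hb : ∀ i, Continuous fun y => b y i) (j : Fin 3) :
    Continuous (fun y => (a y ⨯₃ b y) j) := by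
  fin_cases j <;> simp only [cross_apply, Matrix.cons_val_zero, Matrix.cons_val_one,
    Matrix.head_cons, Matrix.cons_val_two, Matrix.tail_cons]
  · exact ((ha 1).mul (hb 2)).sub ((ha 2).mul (hb 1))
  · exact ((ha 2).mul (hb 0)).sub ((ha 0).mul (hb 2))
  · exact ((ha 0).mul (hb 1)).sub ((ha 1).mul (hb 0))

lemma cont_pv (hf : ContDiff ℝ 2 f) (j i : Fin 3) : Continuous (fun p => pv f p j i) :=
  (continuous_apply i).comp (((hFd_C1 f hf).continuous.clm_apply continuous_const))
lemma cont_nv (hf : ContDiff ℝ 2 f) (i : Fin 3) : Continuous (fun p => nv f p i) :=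
  (continuous_apply i).comp (((hFd_C1 f hf).continuous.clm_apply continuous_const))
lemma cont_DFd (hf : ContDiff ℝ 2 f) : Continuous (fderiv ℝ (fderiv ℝ f)) :=
  (hFd_C1 f hf).continuous_fderiv one_ne_zero
lemma cont_qv (hf : ContDiff ℝ 2 f) (j i : Fin 3) : Continuous (fun p => qv f p j i) :=
  (continuous_apply i).comp ((((cont_DFd f hf).clm_apply continuous_const).clm_apply continuous_const))
lemma cont_sv (hf : ContDiff ℝ 2 f) (j i : Fin 3) : Continuous (fun p => sv f p j i) :=
  (continuous_apply i).comp ((((cont_DFd f hf).clm_apply continuous_const).clm_apply continuous_const))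
lemma cont_f (hf : ContDiff ℝ 2 f) (i : Fin 3) : Continuous (fun p => f p i) :=
  (continuous_apply i).comp hf.continuous

lemma cont_divExp (hf : ContDiff ℝ 2 f) (c1 c2 t : ℝ) :
    Continuous (fun x => divExp f c1 c2 t x) := by
  unfold divExp
  refine continuous_finset_sum _ (fun j _ => Continuous.sub ?_ ?_)
  · exact continuous_const.mul (continuous_finset_sum _ (fun i _ =>
      (((cont_nv f hf i).comp (Continuous.prodMk_right t)).mul
        ((cont_sv f hf j i).comp (Continuous.prodMk_right t))).add
      (((cont_pv f hf j i).comp (Continuous.prodMk_right t)).mul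
        ((cont_qv f hf j i).comp (Continuous.prodMk_right t)))))
  · refine continuous_const.mul (Continuous.add ?_ ?_)
    · exact cont_cross_apply (fun i => (cont_f f hf i).comp (Continuous.prodMk_right t))
        (fun i => (cont_qv f hf j i).comp (Continuous.prodMk_right t)) j
    · exact cont_cross_apply (fun i => (cont_pv f hf j i).comp (Continuous.prodMk_right t))
        (fun i => (cont_nv f hf i).comp (Continuous.prodMk_right t)) j

lemma cont_G0 (hf : ContDiff ℝ 2 f) (H : V3) (c1 c2 c3 μ0 : ℝ) :
    Continuous (G0 f H c1 c2 c3 μ0) := by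
  unfold G0
  refine ((Continuous.add ?_ ?_).sub ?_).add ?_
  · exact continuous_const.mul (continuous_finset_sum _ fun i _ =>
      continuous_finset_sum _ fun j _ => (cont_pv f hf j i).pow 2)
  · refine continuous_const.mul ((Continuous.add ?_ ?_).add ?_)
    · exact ((cont_pv f hf 1 2).sub (cont_pv f hf 2 1)).mul (cont_f f hf 0)
    · exact ((cont_pv f hf 2 0).sub (cont_pv f hf 0 2)).mul (cont_f f hf 1)
    · exact ((cont_pv f hf 0 1).sub (cont_pv f hf 1 0)).mul (cont_f f hf 2)
  · exact continuous_const.mul (((continuous_const.mul (cont_f f hf 0)).add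
      (continuous_const.mul (cont_f f hf 1))).add (continuous_const.mul (cont_f f hf 2)))
  · exact continuous_const.mul (((cont_f f hf 1).pow 2).add ((cont_f f hf 2).pow 2))

lemma cont_G0' (hf : ContDiff ℝ 2 f) (H : V3) (c1 c2 c3 μ0 : ℝ) :
    Continuous (G0' f H c1 c2 c3 μ0) := by
  unfold G0'
  refine ((Continuous.add ?_ ?_).sub ?_).add ?_
  · exact continuous_const.mul (continuous_finset_sum _ fun i _ =>
      continuous_finset_sum _ fun j _ =>
        (continuous_const.mul (cont_pv f hf j i)).mul (cont_qv f hf j i))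
  · refine continuous_const.mul ((Continuous.add ?_ ?_).add ?_)
    · exact (((cont_qv f hf 1 2).sub (cont_qv f hf 2 1)).mul (cont_f f hf 0)).add
        ((((cont_pv f hf 1 2).sub (cont_pv f hf 2 1))).mul (cont_nv f hf 0))
    · exact (((cont_qv f hf 2 0).sub (cont_qv f hf 0 2)).mul (cont_f f hf 1)).add
        ((((cont_pv f hf 2 0).sub (cont_pv f hf 0 2))).mul (cont_nv f hf 1))
    · exact (((cont_qv f hf 0 1).sub (cont_qv f hf 1 0)).mul (cont_f f hf 2)).add
        ((((cont_pv f hf 0 1).sub (cont_pv f hf 1 0))).mul (cont_nv f hf 2))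
  · exact continuous_const.mul (((continuous_const.mul (cont_nv f hf 0)).add
      (continuous_const.mul (cont_nv f hf 1))).add (continuous_const.mul (cont_nv f hf 2)))
  · exact continuous_const.mul (((continuous_const.mul (cont_f f hf 1)).mul (cont_nv f hf 1)).add
      (((continuous_const.mul (cont_f f hf 2)).mul (cont_nv f hf 2))))

lemma div_int_zero (hf : ContDiff ℝ 2 f) (L : V3) (hL : ∀ i, 0 < L i)
    (A D Ms : ℝ) (hA : A ≠ 0) (hMs : Ms ≠ 0) (t : ℝ)
    (hBC : ∀ x ∈ Set.Icc (0:V3) L, ∀ j : Fin 3, (x j = L j ∨ x j = 0) →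
      pv f (t, x) j = (-(D/(2*A))) • ((f (t, x)) ⨯₃ (unitVec j))) :
    ∫ x in Set.Icc (0:V3) L, divExp f (A/Ms^2) (D/Ms^2) t x = 0 := by
  set c1 := A/Ms^2
  set c2 := D/Ms^2
  have hle : (0:V3) ≤ L := fun i => (hL i).le
  have hcontw : ∀ j : Fin 3, Continuous (wf f c1 c2 t j) := by
    intro j
    refine Continuous.sub ?_ ?_
    · exact continuous_const.mul (continuous_finset_sum _ (fun i _ =>
        ((cont_nv f hf i).comp (Continuous.prodMk_right t)).mul
          ((cont_pv f hf j i).comp (Continuous.prodMk_right t))))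
    · exact continuous_const.mul (cont_cross_apply
        (fun i => (cont_f f hf i).comp (Continuous.prodMk_right t))
        (fun i => (cont_nv f hf i).comp (Continuous.prodMk_right t)) j)
  have heval : ∀ x : V3, (∑ j : Fin 3, fderiv ℝ (wf f c1 c2 t j) x (Pi.single j 1))
      = divExp f c1 c2 t x := by
    intro x
    unfold divExp
    exact Finset.sum_congr rfl (fun j _ => (hw f hf c1 c2 t j x).2)
  have key := MeasureTheory.integral_divergence_of_hasFDerivAt_off_countable
    (a := (0:V3)) (b := L) hle (fun x j => wf f c1 c2 t j x)
    (fun x => ContinuousLinearMap.pi (fun j => fderiv ℝ (wf f c1 c2 t j) x)) ∅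
    Set.countable_empty
    (continuousOn_pi.2 fun j => (hcontw j).continuousOn)
    (fun x _ => hasFDerivAt_pi.2 (fun j => (hw f hf c1 c2 t j x).1.hasFDerivAt))
    ?_
  · rw [show (fun x : V3 => ∑ i : Fin 3,
        (ContinuousLinearMap.pi (fun j => fderiv ℝ (wf f c1 c2 t j) x)) (Pi.single i 1) i)
        = fun x => divExp f c1 c2 t x from funext fun x => by
          simpa only [ContinuousLinearMap.pi_apply] using heval x] at key
    rw [key]
    refine Finset.sum_eq_zero (fun j _ => ?_)
    have hface : ∀ (c : ℝ), (c = L j ∨ c = 0) → c ∈ Set.Icc (0:ℝ) (L j) →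
        ∀ y ∈ Set.Icc ((0:V3) ∘ j.succAbove) (L ∘ j.succAbove),
        wf f c1 c2 t j (j.insertNth c y) = 0 := by
      intro c hc hcIcc y hy
      have hmem : (j.insertNth c y : V3) ∈ Set.Icc (0:V3) L := by
        refine Fin.insertNth_mem_Icc.2 ⟨hcIcc, ?_⟩
        exact hy
      have hcoord : (j.insertNth c y : V3) j = c := by simp
      refine wf_face_zero f A D Ms hA hMs t _ j (hBC _ hmem j ?_)
      rw [hcoord]; exact hc
    have z1 : (∫ x in Set.Icc ((0:V3) ∘ j.succAbove) (L ∘ j.succAbove),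
        wf f c1 c2 t j (j.insertNth (L j) x)) = 0 := by
      rw [MeasureTheory.setIntegral_congr_fun measurableSet_Icc
        (fun y hy => hface (L j) (Or.inl rfl) ⟨(hL j).le, le_refl _⟩ y hy)]
      exact integral_zero _ _
    have z2 : (∫ x in Set.Icc ((0:V3) ∘ j.succAbove) (L ∘ j.succAbove),
        wf f c1 c2 t j (j.insertNth ((0:V3) j) x)) = 0 := by
      rw [MeasureTheory.setIntegral_congr_fun measurableSet_Icc
        (fun y hy => hface ((0:V3) j) (Or.inr rfl) ⟨le_refl _, (hL j).le⟩ y hy)]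
      exact integral_zero _ _
    rw [z1, z2, sub_zero]
  · rw [show (fun x : V3 => ∑ i : Fin 3,
        (ContinuousLinearMap.pi (fun j => fderiv ℝ (wf f c1 c2 t j) x)) (Pi.single i 1) i)
        = fun x => divExp f c1 c2 t x from funext fun x => by
          simpa only [ContinuousLinearMap.pi_apply] using heval x]
    exact (cont_divExp f hf c1 c2 t).continuousOn.integrableOn_compact isCompact_Icc

lemma unitVec_apply (i k : Fin 3) : unitVec i k = if k = i then 1 else 0 := by
  simp [unitVec, Pi.single_apply]

lemma main_aux (T A D Ku μ0 Ms : ℝ) (L : V3)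
    (hT : 0 < T) (hA : 0 < A) (hKu : 0 ≤ Ku) (hμ0 : 0 < μ0) (hMs : 0 < Ms)
    (hL : ∀ i, 0 < L i)
    (H : V3) (Hs : ℝ → V3 → V3)
    (hf : ContDiff ℝ 2 f)
    (hHsCont : Continuous (fun p : ℝ × V3 => Hs p.1 p.2))
    (hRecip : ∀ t : ℝ,
      HasDerivAt (fun s => ∫ x in Set.Icc (0:V3) L, (f (s, x)) ⬝ᵥ (Hs s x))
        (2 * ∫ x in Set.Icc (0:V3) L, (deriv (fun s => f (s, x)) t) ⬝ᵥ (Hs t x)) t)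
    (hBC : ∀ t ∈ Set.Icc (0:ℝ) T, ∀ x ∈ Set.Icc (0 : V3) L, ∀ i : Fin 3,
      (x i = L i → fderiv ℝ (fun y => f (t, y)) x (unitVec i) =
          (-(D/(2*A))) • ((f (t, x)) ⨯₃ (unitVec i)))
      ∧ (x i = 0 → fderiv ℝ (fun y => f (t, y)) x (-(unitVec i)) =
          (-(D/(2*A))) • ((f (t, x)) ⨯₃ (-(unitVec i))))) :
    ∀ t ∈ Set.Ioo (0:ℝ) T,
      HasDerivAt (fun s => Fenergy A D Ku μ0 Ms H L (Hs s) (fun y => f (s, y)))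
        (-∫ x in Set.Icc (0:V3) L,
            (deriv (fun s => f (s, x)) t) ⬝ᵥ
              (Heff A D Ku μ0 Ms H (Hs t) (fun y => f (t, y)) x)) t := by
  intro t ht
  have htT : t ∈ Set.Icc (0:ℝ) T := ⟨ht.1.le, ht.2.le⟩
  have hfd := hf_diff f hf
  -- basic rewrites
  have hpders : ∀ (s : ℝ) (x : V3) (j : Fin 3), pder j (fun y => f (s, y)) x = pv f (s, x) j := by
    intro s x j
    have h2 : fderiv ℝ (fun y => f (s, y)) x
        = (fderiv ℝ f (s, x)).comp (ContinuousLinearMap.inr ℝ ℝ V3) :=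
      (hasFDerivAt_slice f hfd s x).fderiv
    rw [pder, h2]; rfl
  have hpders2 : ∀ (x : V3) (j : Fin 3),
      pder j (pder j (fun y => f (t, y))) x = sv f (t, x) j := by
    intro x j
    have e1 : pder j (fun y => f (t, y)) = fun y => pv f (t, y) j :=
      funext fun y => hpders t y j
    rw [pder, e1]
    have h2 : fderiv ℝ (fun y => pv f (t, y) j) x
        = (ContinuousLinearMap.apply ℝ V3 ((0:ℝ), unitVec j)).comp
          ((fderiv ℝ (fderiv ℝ f) (t, x)).comp (ContinuousLinearMap.inr ℝ ℝ V3)) :=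
      (hasFDerivAt_space_Fd f hf t x ((0:ℝ), unitVec j)).fderiv
    rw [h2]; rfl
  have hNt : ∀ x : V3, deriv (fun s => f (s, x)) t = nv f (t, x) :=
    fun x => (hasDerivAt_time f hfd t x).deriv
  -- continuity facts
  have contM : ∀ (s : ℝ) (i : Fin 3), Continuous (fun x : V3 => f (s, x) i) :=
    fun s i => (cont_f f hf i).comp (Continuous.prodMk_right s)
  have contHs : ∀ (s : ℝ) (i : Fin 3), Continuous (fun x : V3 => Hs s x i) :=
    fun s i => (continuous_apply i).comp (hHsCont.comp (Continuous.prodMk_right s))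
  have contDot : ∀ s : ℝ, Continuous (fun x : V3 => f (s, x) ⬝ᵥ Hs s x) :=
    fun s => continuous_finset_sum _ (fun i _ => (contM s i).mul (contHs s i))
  have contnvHs : Continuous (fun x : V3 => nv f (t, x) ⬝ᵥ Hs t x) :=
    continuous_finset_sum _ (fun i _ =>
      (((cont_nv f hf i).comp (Continuous.prodMk_right t))).mul (contHs t i))
  -- splitting of the energy
  have hinteq : ∀ (s : ℝ) (x : V3),
      (A/Ms^2) * gradSq (fun y => f (s, y)) x
        + (D/Ms^2) * ((curl3 (fun y => f (s, y)) x) ⬝ᵥ (f (s, x)))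
        - μ0 * (H ⬝ᵥ (f (s, x))) - (μ0/2) * ((Hs s x) ⬝ᵥ (f (s, x)))
        + (Ku/Ms^2) * ((f (s, x) 1)^2 + (f (s, x) 2)^2)
      = G0 f H (A/Ms^2) (D/Ms^2) (Ku/Ms^2) μ0 (s, x) - μ0/2 * (f (s, x) ⬝ᵥ Hs s x) := by
    intro s x
    simp only [gradSq, curl3, hpders, G0, dotProduct, Fin.sum_univ_three,
      Matrix.cons_val_zero, Matrix.cons_val_one, Matrix.head_cons,
      Matrix.cons_val_two, Matrix.tail_cons]
    ring
  have intG0s : ∀ s : ℝ, IntegrableOn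
      (fun x => G0 f H (A/Ms^2) (D/Ms^2) (Ku/Ms^2) μ0 (s, x)) (Set.Icc (0:V3) L) :=
    fun s => (((cont_G0 f hf H (A/Ms^2) (D/Ms^2) (Ku/Ms^2) μ0).comp
      (Continuous.prodMk_right s))).continuousOn.integrableOn_compact isCompact_Icc
  have intdots : ∀ s : ℝ, IntegrableOn
      (fun x => μ0/2 * (f (s, x) ⬝ᵥ Hs s x)) (Set.Icc (0:V3) L) :=
    fun s => (continuous_const.mul (contDot s)).continuousOn.integrableOn_compact isCompact_Icc
  have hsplit : ∀ s : ℝ, Fenergy A D Ku μ0 Ms H L (Hs s) (fun y => f (s, y))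
      = (∫ x in Set.Icc (0:V3) L, G0 f H (A/Ms^2) (D/Ms^2) (Ku/Ms^2) μ0 (s, x))
        - μ0/2 * ∫ x in Set.Icc (0:V3) L, f (s, x) ⬝ᵥ Hs s x := by
    intro s
    rw [Fenergy]
    rw [MeasureTheory.setIntegral_congr_fun measurableSet_Icc (fun x _ => hinteq s x)]
    rw [MeasureTheory.integral_sub (intG0s s) (intdots s), MeasureTheory.integral_const_mul]
  -- derivative of the G0 part
  have h1 : HasDerivAt (fun s => ∫ x in Set.Icc (0:V3) L,
        G0 f H (A/Ms^2) (D/Ms^2) (Ku/Ms^2) μ0 (s, x))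
      (∫ x in Set.Icc (0:V3) L, G0' f H (A/Ms^2) (D/Ms^2) (Ku/Ms^2) μ0 (t, x)) t :=
    hasDerivAt_setIntegral_Icc L _ _
      (cont_G0 f hf H (A/Ms^2) (D/Ms^2) (Ku/Ms^2) μ0)
      (cont_G0' f hf H (A/Ms^2) (D/Ms^2) (Ku/Ms^2) μ0)
      (fun s x => hasDerivAt_G0 f hf H (A/Ms^2) (D/Ms^2) (Ku/Ms^2) μ0 s x) t
  -- the reciprocity derivative
  have h2 := hRecip t
  simp only [hNt] at h2
  -- normalized boundary condition and divergence theorem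
  have hBC' : ∀ x ∈ Set.Icc (0:V3) L, ∀ j : Fin 3, (x j = L j ∨ x j = 0) →
      pv f (t, x) j = (-(D/(2*A))) • ((f (t, x)) ⨯₃ (unitVec j)) := by
    intro x hx j hj
    have hpveq : pv f (t, x) j = fderiv ℝ (fun y => f (t, y)) x (unitVec j) := by
      rw [(hasFDerivAt_slice f hfd t x).fderiv]; rfl
    rcases hj with hj | hj
    · rw [hpveq]
      exact (hBC t htT x hx j).1 hj
    · have hb := (hBC t htT x hx j).2 hj
      rw [map_neg, map_neg, smul_neg] at hb
      rw [hpveq]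
      exact neg_injective hb
  have hdiv0 := div_int_zero f hf L hL A D Ms (ne_of_gt hA) (ne_of_gt hMs) t hBC'
  -- pointwise divergence identity
  have hpt : ∀ x : V3, G0' f H (A/Ms^2) (D/Ms^2) (Ku/Ms^2) μ0 (t, x)
      = divExp f (A/Ms^2) (D/Ms^2) t x
        + (-(nv f (t, x) ⬝ᵥ Heff A D Ku μ0 Ms H (Hs t) (fun y => f (t, y)) x)
          + μ0 * (nv f (t, x) ⬝ᵥ Hs t x)) := by
    intro x
    simp only [G0', divExp, Heff, lap3, curl3, hpders, hpders2, dotProduct, cross_apply,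
      Fin.sum_univ_three, Finset.sum_apply, Pi.add_apply, Pi.sub_apply, Pi.smul_apply,
      smul_eq_mul, Matrix.cons_val_zero, Matrix.cons_val_one, Matrix.head_cons,
      Matrix.cons_val_two, Matrix.tail_cons, unitVec_apply, Fin.reduceEq, reduceIte,
      mul_zero, mul_one, zero_mul, one_mul, add_zero, zero_add]
    ring
  -- integrability
  have intG0' : IntegrableOn
      (fun x => G0' f H (A/Ms^2) (D/Ms^2) (Ku/Ms^2) μ0 (t, x)) (Set.Icc (0:V3) L) :=
    (((cont_G0' f hf H (A/Ms^2) (D/Ms^2) (Ku/Ms^2) μ0).comp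
      (Continuous.prodMk_right t))).continuousOn.integrableOn_compact isCompact_Icc
  have intdiv : IntegrableOn (fun x => divExp f (A/Ms^2) (D/Ms^2) t x) (Set.Icc (0:V3) L) :=
    (cont_divExp f hf (A/Ms^2) (D/Ms^2) t).continuousOn.integrableOn_compact isCompact_Icc
  have intnvHs : IntegrableOn (fun x : V3 => nv f (t, x) ⬝ᵥ Hs t x) (Set.Icc (0:V3) L) :=
    contnvHs.continuousOn.integrableOn_compact isCompact_Icc
  -- the value identity
  have hval : (∫ x in Set.Icc (0:V3) L, G0' f H (A/Ms^2) (D/Ms^2) (Ku/Ms^2) μ0 (t, x))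
      - μ0/2 * (2 * ∫ x in Set.Icc (0:V3) L, nv f (t, x) ⬝ᵥ Hs t x)
      = -∫ x in Set.Icc (0:V3) L,
          nv f (t, x) ⬝ᵥ Heff A D Ku μ0 Ms H (Hs t) (fun y => f (t, y)) x := by
    have e1 : (∫ x in Set.Icc (0:V3) L,
          nv f (t, x) ⬝ᵥ Heff A D Ku μ0 Ms H (Hs t) (fun y => f (t, y)) x)
        = μ0 * (∫ x in Set.Icc (0:V3) L, nv f (t, x) ⬝ᵥ Hs t x)
          + (∫ x in Set.Icc (0:V3) L, divExp f (A/Ms^2) (D/Ms^2) t x)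
          - ∫ x in Set.Icc (0:V3) L, G0' f H (A/Ms^2) (D/Ms^2) (Ku/Ms^2) μ0 (t, x) := by
      rw [MeasureTheory.setIntegral_congr_fun measurableSet_Icc
        (fun x _ => show nv f (t, x) ⬝ᵥ Heff A D Ku μ0 Ms H (Hs t) (fun y => f (t, y)) x
            = μ0 * (nv f (t, x) ⬝ᵥ Hs t x) + divExp f (A/Ms^2) (D/Ms^2) t x
              - G0' f H (A/Ms^2) (D/Ms^2) (Ku/Ms^2) μ0 (t, x) from by
          have h := hpt x; linarith)]
      have intconst : IntegrableOn (fun x : V3 => μ0 * (nv f (t, x) ⬝ᵥ Hs t x))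
          (Set.Icc (0:V3) L) := intnvHs.const_mul μ0
      have intsum : IntegrableOn (fun x : V3 => μ0 * (nv f (t, x) ⬝ᵥ Hs t x)
          + divExp f (A/Ms^2) (D/Ms^2) t x) (Set.Icc (0:V3) L) := intconst.add intdiv
      rw [MeasureTheory.integral_sub intsum intG0',
        MeasureTheory.integral_add intconst intdiv,
        MeasureTheory.integral_const_mul]
    rw [e1, hdiv0]
    ring
  -- final assembly
  have hfun : (fun s => Fenergy A D Ku μ0 Ms H L (Hs s) (fun y => f (s, y)))
      = fun s => (∫ x in Set.Icc (0:V3) L, G0 f H (A/Ms^2) (D/Ms^2) (Ku/Ms^2) μ0 (s, x))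
          - μ0/2 * ∫ x in Set.Icc (0:V3) L, f (s, x) ⬝ᵥ Hs s x := funext hsplit
  rw [hfun]
  simp only [hNt]
  exact (h1.sub (h2.const_mul (μ0/2))).congr_deriv hval

end EDI

/-- **Energy derivative identity under the chiral boundary condition.**
If `M` is smooth enough and satisfies the chiral boundary condition
`∂M/∂ν = −(D/(2A)) M × ν` on `[0,T] × ∂Ω`, the applied field `H` is constant in time, and
the stray field `Hs` satisfies the reciprocity relation, then for all `t ∈ (0,T)`,
`d/dt F[M(t,·)] = −∫_Ω (∂M/∂t) · 𝓗 dx`. -/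
theorem energy_derivative_identity (T A D Ku μ0 Ms : ℝ) (L : V3)
    (hT : 0 < T) (hA : 0 < A) (hKu : 0 ≤ Ku) (hμ0 : 0 < μ0) (hMs : 0 < Ms)
    (hL : ∀ i, 0 < L i)
    (H : V3) (M Hs : ℝ → V3 → V3)
    (hM : ContDiff ℝ 2 (fun p : ℝ × V3 => M p.1 p.2))
    (hHsCont : Continuous (fun p : ℝ × V3 => Hs p.1 p.2))
    (hHsDiff : ∀ x : V3, Differentiable ℝ (fun t => Hs t x))
    (hRecip : ∀ t : ℝ,
      HasDerivAt (fun s => ∫ x in Set.Icc (0:V3) L, (M s x) ⬝ᵥ (Hs s x))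
        (2 * ∫ x in Set.Icc (0:V3) L, (deriv (fun s => M s x) t) ⬝ᵥ (Hs t x)) t)
    (hBC : ∀ t ∈ Set.Icc (0:ℝ) T, chiralBC L (D / (2*A)) (M t)) :
    ∀ t ∈ Set.Ioo (0:ℝ) T,
      HasDerivAt (fun s => Fenergy A D Ku μ0 Ms H L (Hs s) (M s))
        (-∫ x in Set.Icc (0:V3) L,
            (deriv (fun s => M s x) t) ⬝ᵥ (Heff A D Ku μ0 Ms H (Hs t) (M t) x)) t := by
  intro t ht
  exact EDI.main_aux (fun p : ℝ × V3 => M p.1 p.2) T A D Ku μ0 Ms L hT hA hKu hμ0 hMs hL H Hs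
    hM hHsCont hRecip hBC t ht

end
end

section
/- Time derivative of the DMI energy: Let M : [0,T]×Ω → ℝ³ be twice continuously differentiable jointly in time and space. Then for all t ∈ (0,T), d/dt ∫_Ω M·(∇×M) dx = 2∫_Ω (∂M/∂t)·(∇×M) dx − ∫_{∂Ω} ( M × ∂M/∂t )·ν dS. -/
open MeasureTheory Matrix

noncomputable section

namespace DMIAux

lemma fderiv_pi_apply {f : V3 → V3} {x : V3} (hf : DifferentiableAt ℝ f x) (v : V3) (k : Fin 3) :
    fderiv ℝ (fun y => f y k) x v = fderiv ℝ f x v k := by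
  have h := (ContinuousLinearMap.proj (R := ℝ) (φ := fun _ : Fin 3 => ℝ) k).hasFDerivAt.comp x
    hf.hasFDerivAt
  have e : (fun y => f y k)
      = (ContinuousLinearMap.proj (R := ℝ) (φ := fun _ : Fin 3 => ℝ) k) ∘ f := rfl
  rw [e, h.fderiv]; rfl

lemma fderiv_mul_apply {a b : V3 → ℝ} {x : V3} (ha : DifferentiableAt ℝ a x)
    (hb : DifferentiableAt ℝ b x) (v : V3) :
    fderiv ℝ (fun y => a y * b y) x v
      = fderiv ℝ a x v * b x + a x * fderiv ℝ b x v := by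
  rw [fderiv_fun_mul ha hb]
  simp only [ContinuousLinearMap.add_apply, ContinuousLinearMap.coe_smul', Pi.smul_apply,
    smul_eq_mul]
  ring

lemma iterated_icc (a b : Fin 2 → ℝ) (g : (Fin 2 → ℝ) → ℝ) (hg : Continuous g) :
    ∫ y in Set.Icc a b, g y
      = ∫ u in Set.Icc (a 0) (b 0), ∫ v in Set.Icc (a 1) (b 1), g ![u, v] := by
  have hmp : MeasurePreserving (MeasurableEquiv.finTwoArrow (α := ℝ)).symm volume volume :=
    (volume_preserving_finTwoArrow ℝ).symm _
  have hemb : MeasurableEmbedding (MeasurableEquiv.finTwoArrow (α := ℝ)).symm :=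
    (MeasurableEquiv.finTwoArrow (α := ℝ)).symm.measurableEmbedding
  have hpre : (MeasurableEquiv.finTwoArrow (α := ℝ)).symm ⁻¹' (Set.Icc a b)
      = Set.Icc (a 0) (b 0) ×ˢ Set.Icc (a 1) (b 1) := by
    ext p
    simp only [Set.mem_preimage, Set.mem_Icc, Set.mem_prod, MeasurableEquiv.finTwoArrow,
      MeasurableEquiv.symm_mk, MeasurableEquiv.coe_mk, Equiv.symm_symm]
    constructor
    · rintro ⟨h1, h2⟩
      exact ⟨⟨h1 0, h2 0⟩, ⟨h1 1, h2 1⟩⟩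
    · rintro ⟨⟨h1, h2⟩, h3, h4⟩
      constructor <;> intro i <;> fin_cases i <;> simpa
  rw [← hmp.setIntegral_preimage_emb hemb, hpre]
  rw [Measure.volume_eq_prod, setIntegral_prod]
  · rfl
  · have hc2 : Continuous (fun p : ℝ × ℝ => (![p.1, p.2] : Fin 2 → ℝ)) := by
      apply continuous_pi; intro i; fin_cases i
      · exact continuous_fst
      · exact continuous_snd
    exact ((hg.comp hc2).continuousOn).integrableOn_compact (isCompact_Icc.prod isCompact_Icc)

lemma divergence_box (L : V3) (hL : ∀ i, 0 < L i) (G : V3 → V3) (hG : ContDiff ℝ 1 G) :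
    ∫ x in Set.Icc (0:V3) L, ∑ i : Fin 3, pder i G x i = bdryInt L G := by
  have hle : (0:V3) ≤ L := fun i => (hL i).le
  have hGd : Differentiable ℝ G := hG.differentiable (by norm_num)
  have hGc : Continuous (fderiv ℝ G) := (hG.fderiv_right (m := 0) (by norm_num)).continuous
  have hdivc : Continuous (fun x => ∑ i : Fin 3, fderiv ℝ G x (Pi.single i (1:ℝ)) i) := by
    apply continuous_finset_sum
    intro i _
    exact (continuous_apply i).comp
      ((ContinuousLinearMap.apply ℝ V3 (Pi.single i 1)).continuous.comp hGc)
  have key := integral_divergence_of_hasFDerivAt_off_countable (a := (0:V3)) (b := L)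
    hle G (fderiv ℝ G) ∅ Set.countable_empty hG.continuous.continuousOn
    (fun x _ => (hGd x).hasFDerivAt)
    (hdivc.continuousOn.integrableOn_compact isCompact_Icc)
  have hGcont : Continuous G := hG.continuous
  have ins0 : ∀ (c : ℝ) (y : Fin 2 → ℝ), ((0:Fin 3).insertNth c y : V3) = ![c, y 0, y 1] := by
    intro c y; funext j; fin_cases j <;> simp [Fin.insertNth, Fin.succAboveCases] <;> rfl
  have ins1 : ∀ (c : ℝ) (y : Fin 2 → ℝ), ((1:Fin 3).insertNth c y : V3) = ![y 0, c, y 1] := by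
    intro c y; funext j; fin_cases j <;> simp [Fin.insertNth, Fin.succAboveCases] <;> rfl
  have ins2 : ∀ (c : ℝ) (y : Fin 2 → ℝ), ((2:Fin 3).insertNth c y : V3) = ![y 0, y 1, c] := by
    intro c y; funext j; fin_cases j <;> simp [Fin.insertNth, Fin.succAboveCases] <;> rfl
  have cpat : ∀ (f : (Fin 2 → ℝ) → V3), (∀ j, Continuous fun y => f y j) → Continuous f :=
    fun f h => continuous_pi h
  rw [show (fun x => ∑ i : Fin 3, pder i G x i)
    = fun x => ∑ i : Fin 3, fderiv ℝ G x (Pi.single i (1:ℝ)) i from rfl]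
  rw [key, Fin.sum_univ_three, bdryInt]
  try simp only [Pi.zero_apply]
  congr 1
  · congr 1
    · have h1 : Continuous (fun y : Fin 2 → ℝ => G ((0:Fin 3).insertNth (L 0) y) 0) := by
        simp only [ins0]
        refine (continuous_apply 0).comp (hGcont.comp (cpat _ ?_))
        intro j; fin_cases j
        · exact continuous_const
        · exact continuous_apply 0
        · exact continuous_apply 1
      have h2 : Continuous (fun y : Fin 2 → ℝ => G ((0:Fin 3).insertNth (0:ℝ) y) 0) := by
        simp only [ins0]
        refine (continuous_apply 0).comp (hGcont.comp (cpat _ ?_))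
        intro j; fin_cases j
        · exact continuous_const
        · exact continuous_apply 0
        · exact continuous_apply 1
      rw [← integral_sub (h1.continuousOn.integrableOn_compact isCompact_Icc)
        (h2.continuousOn.integrableOn_compact isCompact_Icc),
        iterated_icc _ _ (fun y => G ((0:Fin 3).insertNth (L 0) y) 0 - G ((0:Fin 3).insertNth (0:ℝ) y) 0) (h1.sub h2)]
      simp only [ins0, Function.comp_apply, Pi.zero_apply,
        show (0:Fin 3).succAbove 0 = 1 by decide, show (0:Fin 3).succAbove 1 = 2 by decide]
      norm_num
    · have h1 : Continuous (fun y : Fin 2 → ℝ => G ((1:Fin 3).insertNth (L 1) y) 1) := by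
        simp only [ins1]
        refine (continuous_apply 1).comp (hGcont.comp (cpat _ ?_))
        intro j; fin_cases j
        · exact continuous_apply 0
        · exact continuous_const
        · exact continuous_apply 1
      have h2 : Continuous (fun y : Fin 2 → ℝ => G ((1:Fin 3).insertNth (0:ℝ) y) 1) := by
        simp only [ins1]
        refine (continuous_apply 1).comp (hGcont.comp (cpat _ ?_))
        intro j; fin_cases j
        · exact continuous_apply 0
        · exact continuous_const
        · exact continuous_apply 1
      rw [← integral_sub (h1.continuousOn.integrableOn_compact isCompact_Icc)
        (h2.continuousOn.integrableOn_compact isCompact_Icc),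
        iterated_icc _ _ (fun y => G ((1:Fin 3).insertNth (L 1) y) 1 - G ((1:Fin 3).insertNth (0:ℝ) y) 1) (h1.sub h2)]
      simp only [ins1, Function.comp_apply, Pi.zero_apply,
        show (1:Fin 3).succAbove 0 = 0 by decide, show (1:Fin 3).succAbove 1 = 2 by decide]
      norm_num
  · have h1 : Continuous (fun y : Fin 2 → ℝ => G ((2:Fin 3).insertNth (L 2) y) 2) := by
      simp only [ins2]
      refine (continuous_apply 2).comp (hGcont.comp (cpat _ ?_))
      intro j; fin_cases j
      · exact continuous_apply 0
      · exact continuous_apply 1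
      · exact continuous_const
    have h2 : Continuous (fun y : Fin 2 → ℝ => G ((2:Fin 3).insertNth (0:ℝ) y) 2) := by
      simp only [ins2]
      refine (continuous_apply 2).comp (hGcont.comp (cpat _ ?_))
      intro j; fin_cases j
      · exact continuous_apply 0
      · exact continuous_apply 1
      · exact continuous_const
    rw [← integral_sub (h1.continuousOn.integrableOn_compact isCompact_Icc)
      (h2.continuousOn.integrableOn_compact isCompact_Icc),
      iterated_icc _ _ (fun y => G ((2:Fin 3).insertNth (L 2) y) 2 - G ((2:Fin 3).insertNth (0:ℝ) y) 2) (h1.sub h2)]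
    simp only [ins2, Function.comp_apply, Pi.zero_apply,
      show (2:Fin 3).succAbove 0 = 0 by decide, show (2:Fin 3).succAbove 1 = 1 by decide]
    norm_num

lemma div_cross (f g : V3 → V3) (hf : Differentiable ℝ f) (hg : Differentiable ℝ g) (x : V3) :
    ∑ i : Fin 3, pder i (fun y => f y ⨯₃ g y) x i
      = g x ⬝ᵥ curl3 f x - f x ⬝ᵥ curl3 g x := by
  have hfk : ∀ k : Fin 3, DifferentiableAt ℝ (fun y => f y k) x :=
    fun k => differentiableAt_pi.1 (hf x) k
  have hgk : ∀ k : Fin 3, DifferentiableAt ℝ (fun y => g y k) x :=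
    fun k => differentiableAt_pi.1 (hg x) k
  have c0 : (fun y => (f y ⨯₃ g y) 0) = fun y => f y 1 * g y 2 - f y 2 * g y 1 := by
    funext y; simp [cross_apply]
  have c1 : (fun y => (f y ⨯₃ g y) 1) = fun y => f y 2 * g y 0 - f y 0 * g y 2 := by
    funext y; simp [cross_apply]
  have c2 : (fun y => (f y ⨯₃ g y) 2) = fun y => f y 0 * g y 1 - f y 1 * g y 0 := by
    funext y; simp [cross_apply]
  have hcross : DifferentiableAt ℝ (fun y => f y ⨯₃ g y) x := by
    apply differentiableAt_pi.2
    intro k; fin_cases k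
    · rw [show (fun y => (f y ⨯₃ g y) (⟨0, by norm_num⟩ : Fin 3)) = fun y => (f y ⨯₃ g y) 0 from rfl,
        c0]
      exact ((hfk 1).mul (hgk 2)).sub ((hfk 2).mul (hgk 1))
    · rw [show (fun y => (f y ⨯₃ g y) (⟨1, by norm_num⟩ : Fin 3)) = fun y => (f y ⨯₃ g y) 1 from rfl,
        c1]
      exact ((hfk 2).mul (hgk 0)).sub ((hfk 0).mul (hgk 2))
    · rw [show (fun y => (f y ⨯₃ g y) (⟨2, by norm_num⟩ : Fin 3)) = fun y => (f y ⨯₃ g y) 2 from rfl,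
        c2]
      exact ((hfk 0).mul (hgk 1)).sub ((hfk 1).mul (hgk 0))
  have pc : ∀ (i k a b : Fin 3),
      ((fun y => (f y ⨯₃ g y) k) = fun y => f y a * g y b - f y b * g y a) →
      pder i (fun y => f y ⨯₃ g y) x k
        = (fderiv ℝ f x (unitVec i) a * g x b + f x a * fderiv ℝ g x (unitVec i) b)
          - (fderiv ℝ f x (unitVec i) b * g x a + f x b * fderiv ℝ g x (unitVec i) a) := by
    intro i k a b hk
    rw [pder, ← fderiv_pi_apply hcross, hk,
      fderiv_fun_sub (f := fun y => f y a * g y b) (g := fun y => f y b * g y a) ((hfk a).mul (hgk b)) ((hfk b).mul (hgk a))]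
    simp only [ContinuousLinearMap.coe_sub', Pi.sub_apply]
    rw [fderiv_mul_apply (hfk a) (hgk b), fderiv_mul_apply (hfk b) (hgk a),
      fderiv_pi_apply (hf x), fderiv_pi_apply (hf x), fderiv_pi_apply (hg x),
      fderiv_pi_apply (hg x)]
  rw [Fin.sum_univ_three, pc 0 0 1 2 c0, pc 1 1 2 0 c1, pc 2 2 0 1 c2]
  simp only [curl3, pder, dotProduct, Fin.sum_univ_three, Matrix.cons_val_zero,
    Matrix.cons_val_one, Matrix.head_cons, Matrix.cons_val_two, Matrix.tail_cons]
  ring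

end DMIAux

set_option maxHeartbeats 2000000 in
/-- **Time derivative of the DMI energy.** For `M : [0,T] × Ω → ℝ³` twice continuously
differentiable jointly in time and space, for all `t ∈ (0,T)`,
`d/dt ∫_Ω M·(∇×M) dx = 2 ∫_Ω (∂M/∂t)·(∇×M) dx − ∫_{∂Ω} (M × ∂M/∂t)·ν dS`. -/
theorem dmi_energy_time_derivative (T : ℝ) (hT : 0 < T) (L : V3) (hL : ∀ i, 0 < L i)
    (M : ℝ → V3 → V3) (hM : ContDiff ℝ 2 (fun p : ℝ × V3 => M p.1 p.2)) :
    ∀ t ∈ Set.Ioo (0:ℝ) T,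
      HasDerivAt (fun s => ∫ x in Set.Icc (0:V3) L, (M s x) ⬝ᵥ (curl3 (M s) x))
        (2 * (∫ x in Set.Icc (0:V3) L,
            (deriv (fun s => M s x) t) ⬝ᵥ (curl3 (M t) x))
          - bdryInt L (fun x => (M t x) ⨯₃ (deriv (fun s => M s x) t))) t := by
  intro t _
  classical
  set F : ℝ × V3 → V3 := fun p => M p.1 p.2 with hFdef
  have hF : ContDiff ℝ 2 F := hM
  have hFd : Differentiable ℝ F := hF.differentiable (by norm_num)
  set A : ℝ × V3 → (ℝ × V3) →L[ℝ] V3 := fderiv ℝ F with hAdef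
  have hA : ContDiff ℝ 1 A := hF.fderiv_right (m := 1) (by norm_num)
  have hAd : Differentiable ℝ A := hA.differentiable (by norm_num)
  set B : ℝ × V3 → (ℝ × V3) →L[ℝ] (ℝ × V3) →L[ℝ] V3 := fderiv ℝ A with hBdef
  have hBc : Continuous B := (hA.fderiv_right (m := 0) (by norm_num)).continuous
  -- embeddings
  have hembx : ∀ (s : ℝ) (x : V3), HasFDerivAt (fun y : V3 => (s, y))
      ((0 : V3 →L[ℝ] ℝ).prod (ContinuousLinearMap.id ℝ V3)) x :=
    fun s x => (hasFDerivAt_const s x).prodMk (hasFDerivAt_id x)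
  have hembt : ∀ (x : V3) (s : ℝ), HasDerivAt (fun r : ℝ => (r, x)) ((1:ℝ), (0:V3)) s :=
    fun x s => (hasDerivAt_id s).prodMk (hasDerivAt_const s x)
  have cembx : ∀ s : ℝ, Continuous (fun y : V3 => ((s, y) : ℝ × V3)) :=
    fun s => continuous_const.prodMk continuous_id
  -- spatial derivative of M s
  have hMx : ∀ (s : ℝ) (x : V3), HasFDerivAt (M s)
      ((A (s, x)).comp ((0 : V3 →L[ℝ] ℝ).prod (ContinuousLinearMap.id ℝ V3))) x :=
    fun s x => ((hFd (s, x)).hasFDerivAt).comp x (hembx s x)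
  have hpder : ∀ (s : ℝ) (x : V3) (j : Fin 3),
      pder j (M s) x = A (s, x) (0, unitVec j) := by
    intro s x j
    rw [pder, (hMx s x).fderiv]
    rfl
  have hcurl : ∀ (s : ℝ) (x : V3), curl3 (M s) x
      = ![A (s,x) (0, unitVec 1) 2 - A (s,x) (0, unitVec 2) 1,
          A (s,x) (0, unitVec 2) 0 - A (s,x) (0, unitVec 0) 2,
          A (s,x) (0, unitVec 0) 1 - A (s,x) (0, unitVec 1) 0] := by
    intro s x
    rw [curl3, hpder, hpder, hpder]
  -- time derivatives
  have hMt : ∀ (x : V3) (s : ℝ), HasDerivAt (fun r => M r x) (A (s, x) (1, 0)) s :=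
    fun x s => by have h := ((hFd (s, x)).hasFDerivAt).comp_hasDerivAt s (hembt x s); exact h
  have hMtk : ∀ (x : V3) (s : ℝ) (k : Fin 3),
      HasDerivAt (fun r => M r x k) (A (s, x) (1, 0) k) s := by
    intro x s k
    have h := (ContinuousLinearMap.proj (R := ℝ) (φ := fun _ : Fin 3 => ℝ)
      k).hasFDerivAt.comp_hasDerivAt s (hMt x s)
    exact h
  have hAt : ∀ (x : V3) (s : ℝ) (v : ℝ × V3) (k : Fin 3),
      HasDerivAt (fun r => A (r, x) v k) (B (s, x) (1, 0) v k) s := by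
    intro x s v k
    have h2 : HasDerivAt (fun r => A (r, x)) (B (s, x) (1, 0)) s :=
      (hAd (s, x)).hasFDerivAt.comp_hasDerivAt s (hembt x s)
    have h3 := ((ContinuousLinearMap.proj (R := ℝ) (φ := fun _ : Fin 3 => ℝ) k).comp
      (ContinuousLinearMap.apply ℝ V3 v)).hasFDerivAt.comp_hasDerivAt s h2
    exact h3
  -- N : the time derivative field at time t
  set N : V3 → V3 := fun y => A (t, y) ((1:ℝ), (0:V3)) with hNdef
  have hderiveq : ∀ x : V3, deriv (fun s => M s x) t = N x := fun x => (hMt x t).deriv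
  have hN : ContDiff ℝ 1 N := by
    have h1 : ContDiff ℝ 1 (fun y : V3 => ((t, y) : ℝ × V3)) :=
      contDiff_const.prodMk contDiff_id
    exact (ContinuousLinearMap.apply ℝ V3 ((1:ℝ), (0:V3))).contDiff.comp (hA.comp h1)
  have hNd : Differentiable ℝ N := hN.differentiable (by norm_num)
  have hNfd : ∀ y : V3, HasFDerivAt N
      (((ContinuousLinearMap.apply ℝ V3 ((1:ℝ), (0:V3))).comp (B (t, y))).comp
        ((0 : V3 →L[ℝ] ℝ).prod (ContinuousLinearMap.id ℝ V3))) y :=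
    fun y => ((ContinuousLinearMap.apply ℝ V3 ((1:ℝ), (0:V3))).hasFDerivAt.comp ((t, y) : ℝ × V3)
      ((hAd (t, y)).hasFDerivAt)).comp y (hembx t y)
  have hpderN : ∀ (y : V3) (j : Fin 3),
      pder j N y = B (t, y) (0, unitVec j) ((1:ℝ), (0:V3)) := by
    intro y j
    rw [pder, (hNfd y).fderiv]
    rfl
  -- symmetry of second derivatives
  have hsymm : ∀ (p : ℝ × V3) (v w : ℝ × V3), B p v w = B p w v :=
    fun p v w => second_derivative_symmetric (f := F) (fun y => (hFd y).hasFDerivAt)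
      ((hAd p).hasFDerivAt) v w
  -- the derivative integrand
  set D : ℝ × V3 → ℝ := fun p =>
    (A p (1, 0) 0) * (A p (0, unitVec 1) 2 - A p (0, unitVec 2) 1)
    + (A p (1, 0) 1) * (A p (0, unitVec 2) 0 - A p (0, unitVec 0) 2)
    + (A p (1, 0) 2) * (A p (0, unitVec 0) 1 - A p (0, unitVec 1) 0)
    + (F p 0) * (B p (1,0) (0, unitVec 1) 2 - B p (1,0) (0, unitVec 2) 1)
    + (F p 1) * (B p (1,0) (0, unitVec 2) 0 - B p (1,0) (0, unitVec 0) 2)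
    + (F p 2) * (B p (1,0) (0, unitVec 0) 1 - B p (1,0) (0, unitVec 1) 0) with hDdef
  -- continuity helpers
  have cF : ∀ k : Fin 3, Continuous fun p : ℝ × V3 => F p k :=
    fun k => (continuous_apply k).comp hF.continuous
  have cA : ∀ (v : ℝ × V3) (k : Fin 3), Continuous fun p : ℝ × V3 => A p v k :=
    fun v k => (continuous_apply k).comp
      ((ContinuousLinearMap.apply ℝ V3 v).continuous.comp hA.continuous)
  have cB : ∀ (v w : ℝ × V3) (k : Fin 3), Continuous fun p : ℝ × V3 => B p v w k :=
    fun v w k => (continuous_apply k).comp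
      ((ContinuousLinearMap.apply ℝ V3 w).continuous.comp
        ((ContinuousLinearMap.apply ℝ ((ℝ × V3) →L[ℝ] V3) v).continuous.comp hBc))
  have hDc : Continuous D := by
    refine (((((((cA (1,0) 0).mul ((cA (0, unitVec 1) 2).sub (cA (0, unitVec 2) 1))).add
      ((cA (1,0) 1).mul ((cA (0, unitVec 2) 0).sub (cA (0, unitVec 0) 2)))).add
      ((cA (1,0) 2).mul ((cA (0, unitVec 0) 1).sub (cA (0, unitVec 1) 0)))).add
      ((cF 0).mul ((cB (1,0) (0, unitVec 1) 2).sub (cB (1,0) (0, unitVec 2) 1)))).add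
      ((cF 1).mul ((cB (1,0) (0, unitVec 2) 0).sub (cB (1,0) (0, unitVec 0) 2)))).add
      ((cF 2).mul ((cB (1,0) (0, unitVec 0) 1).sub (cB (1,0) (0, unitVec 1) 0))))
  -- pointwise derivative of the integrand in time
  have hptwise : ∀ (x : V3) (s : ℝ),
      HasDerivAt (fun r => M r x ⬝ᵥ curl3 (M r) x) (D (s, x)) s := by
    intro x s
    have e1 : (fun r => M r x ⬝ᵥ curl3 (M r) x)
        = fun r => M r x 0 * (A (r,x) (0, unitVec 1) 2 - A (r,x) (0, unitVec 2) 1)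
          + M r x 1 * (A (r,x) (0, unitVec 2) 0 - A (r,x) (0, unitVec 0) 2)
          + M r x 2 * (A (r,x) (0, unitVec 0) 1 - A (r,x) (0, unitVec 1) 0) := by
      funext r
      rw [hcurl r x]
      simp [dotProduct, Fin.sum_univ_three]
    rw [e1]
    have h := ((((hMtk x s 0).mul ((hAt x s (0, unitVec 1) 2).sub (hAt x s (0, unitVec 2) 1))).add
      ((hMtk x s 1).mul ((hAt x s (0, unitVec 2) 0).sub (hAt x s (0, unitVec 0) 2)))).add
      ((hMtk x s 2).mul ((hAt x s (0, unitVec 0) 1).sub (hAt x s (0, unitVec 1) 0))))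
    refine h.congr_deriv ?_
    simp only [hDdef, hFdef, Pi.sub_apply]
    ring
  -- the divergence field
  set G : V3 → V3 := fun y => M t y ⨯₃ N y with hGdef
  have hMt1 : ContDiff ℝ 1 (M t) := by
    have h1 : ContDiff ℝ 1 (fun y : V3 => ((t, y) : ℝ × V3)) :=
      contDiff_const.prodMk contDiff_id
    exact (hF.of_le one_le_two).comp h1
  have hG : ContDiff ℝ 1 G := by
    apply contDiff_pi.2
    intro k
    have hfk : ∀ k : Fin 3, ContDiff ℝ 1 (fun y => M t y k) :=
      fun k => contDiff_pi.1 hMt1 k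
    have hgk : ∀ k : Fin 3, ContDiff ℝ 1 (fun y => N y k) :=
      fun k => contDiff_pi.1 hN k
    fin_cases k
    · rw [show (fun y => G y (⟨0, by norm_num⟩ : Fin 3))
        = fun y => M t y 1 * N y 2 - M t y 2 * N y 1 from funext fun y => by
          simp [hGdef, cross_apply]]
      exact ((hfk 1).mul (hgk 2)).sub ((hfk 2).mul (hgk 1))
    · rw [show (fun y => G y (⟨1, by norm_num⟩ : Fin 3))
        = fun y => M t y 2 * N y 0 - M t y 0 * N y 2 from funext fun y => by
          simp [hGdef, cross_apply]]
      exact ((hfk 2).mul (hgk 0)).sub ((hfk 0).mul (hgk 2))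
    · rw [show (fun y => G y (⟨2, by norm_num⟩ : Fin 3))
        = fun y => M t y 0 * N y 1 - M t y 1 * N y 0 from funext fun y => by
          simp [hGdef, cross_apply]]
      exact ((hfk 0).mul (hgk 1)).sub ((hfk 1).mul (hgk 0))
  -- pointwise identity: D (t, x) = 2 * (N ⬝ curl M) - div G
  have F3 : ∀ x : V3, D (t, x)
      = 2 * (N x ⬝ᵥ curl3 (M t) x) - ∑ i : Fin 3, pder i G x i := by
    intro x
    rw [hGdef, DMIAux.div_cross (M t) N (hMt1.differentiable (by norm_num)) hNd x]
    have hcurlN : curl3 N x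
        = ![B (t,x) (0, unitVec 1) (1,0) 2 - B (t,x) (0, unitVec 2) (1,0) 1,
            B (t,x) (0, unitVec 2) (1,0) 0 - B (t,x) (0, unitVec 0) (1,0) 2,
            B (t,x) (0, unitVec 0) (1,0) 1 - B (t,x) (0, unitVec 1) (1,0) 0] := by
      rw [curl3, hpderN, hpderN, hpderN]
    rw [hcurl t x, hcurlN]
    simp only [hDdef, hFdef, hNdef, dotProduct, Fin.sum_univ_three, Matrix.cons_val_zero,
      Matrix.cons_val_one, Matrix.head_cons, Matrix.cons_val_two, Matrix.tail_cons,
      hsymm (t,x) (0, unitVec 0) (1,0), hsymm (t,x) (0, unitVec 1) (1,0),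
      hsymm (t,x) (0, unitVec 2) (1,0)]
    ring
  -- continuity of slices
  have cIntegrand : ∀ s : ℝ, Continuous fun x => M s x ⬝ᵥ curl3 (M s) x := by
    intro s
    have e1 : (fun x => M s x ⬝ᵥ curl3 (M s) x)
        = fun x => M s x 0 * (A (s,x) (0, unitVec 1) 2 - A (s,x) (0, unitVec 2) 1)
          + M s x 1 * (A (s,x) (0, unitVec 2) 0 - A (s,x) (0, unitVec 0) 2)
          + M s x 2 * (A (s,x) (0, unitVec 0) 1 - A (s,x) (0, unitVec 1) 0) := by
      funext x
      rw [hcurl s x]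
      simp [dotProduct, Fin.sum_univ_three]
    rw [e1]
    have cMk : ∀ k : Fin 3, Continuous fun x : V3 => M s x k :=
      fun k => ((cF k).comp (cembx s))
    have cAx : ∀ v k, Continuous fun x : V3 => A (s, x) v k :=
      fun v k => (cA v k).comp (cembx s)
    exact (((cMk 0).mul ((cAx (0, unitVec 1) 2).sub (cAx (0, unitVec 2) 1))).add
      ((cMk 1).mul ((cAx (0, unitVec 2) 0).sub (cAx (0, unitVec 0) 2)))).add
      ((cMk 2).mul ((cAx (0, unitVec 0) 1).sub (cAx (0, unitVec 1) 0)))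
  have cNcurl : Continuous fun x => N x ⬝ᵥ curl3 (M t) x := by
    have e1 : (fun x => N x ⬝ᵥ curl3 (M t) x)
        = fun x => N x 0 * (A (t,x) (0, unitVec 1) 2 - A (t,x) (0, unitVec 2) 1)
          + N x 1 * (A (t,x) (0, unitVec 2) 0 - A (t,x) (0, unitVec 0) 2)
          + N x 2 * (A (t,x) (0, unitVec 0) 1 - A (t,x) (0, unitVec 1) 0) := by
      funext x
      rw [hcurl t x]
      simp [dotProduct, Fin.sum_univ_three]
    rw [e1]
    have cNk : ∀ k : Fin 3, Continuous fun x : V3 => N x k :=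
      fun k => (continuous_apply k).comp hN.continuous
    have cAx : ∀ v k, Continuous fun x : V3 => A (t, x) v k :=
      fun v k => (cA v k).comp (cembx t)
    exact (((cNk 0).mul ((cAx (0, unitVec 1) 2).sub (cAx (0, unitVec 2) 1))).add
      ((cNk 1).mul ((cAx (0, unitVec 2) 0).sub (cAx (0, unitVec 0) 2)))).add
      ((cNk 2).mul ((cAx (0, unitVec 0) 1).sub (cAx (0, unitVec 1) 0)))
  have cdiv : Continuous fun x => ∑ i : Fin 3, pder i G x i := by
    have hGc : Continuous (fderiv ℝ G) := (hG.fderiv_right (m := 0) (by norm_num)).continuous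
    apply continuous_finset_sum
    intro i _
    exact (continuous_apply i).comp
      ((ContinuousLinearMap.apply ℝ V3 (unitVec i)).continuous.comp hGc)
  -- the bound
  obtain ⟨C, hC⟩ := ((isCompact_Icc (a := t - 1) (b := t + 1)).prod
    (isCompact_Icc (a := (0:V3)) (b := L))).exists_bound_of_continuousOn hDc.continuousOn
  -- differentiation under the integral sign
  have hmeas : ∀ᶠ s in nhds t, AEStronglyMeasurable
      (fun x => M s x ⬝ᵥ curl3 (M s) x) (volume.restrict (Set.Icc (0:V3) L)) :=
    Filter.Eventually.of_forall fun s => (cIntegrand s).aestronglyMeasurable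
  have hint : Integrable (fun x => M t x ⬝ᵥ curl3 (M t) x) (volume.restrict (Set.Icc (0:V3) L)) :=
    (cIntegrand t).continuousOn.integrableOn_compact isCompact_Icc
  have hmeas' : AEStronglyMeasurable (fun x => D (t, x))
      (volume.restrict (Set.Icc (0:V3) L)) :=
    (hDc.comp (cembx t)).aestronglyMeasurable
  have hbound : ∀ᵐ x ∂(volume.restrict (Set.Icc (0:V3) L)),
      ∀ s ∈ Metric.ball t 1, ‖D (s, x)‖ ≤ C := by
    refine (ae_restrict_mem measurableSet_Icc).mono fun x hx s hs => ?_
    apply hC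
    constructor
    · rw [Real.ball_eq_Ioo] at hs
      exact ⟨hs.1.le, hs.2.le⟩
    · exact hx
  have hbint : Integrable (fun _ : V3 => C) (volume.restrict (Set.Icc (0:V3) L)) :=
    integrableOn_const isCompact_Icc.measure_lt_top.ne
  have hdiff : ∀ᵐ x ∂(volume.restrict (Set.Icc (0:V3) L)),
      ∀ s ∈ Metric.ball t 1, HasDerivAt (fun r => M r x ⬝ᵥ curl3 (M r) x) (D (s, x)) s :=
    Filter.Eventually.of_forall fun x s _ => hptwise x s
  have main := (hasDerivAt_integral_of_dominated_loc_of_deriv_le (Metric.ball_mem_nhds t one_pos) hmeas hint hmeas'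
    hbound hbint hdiff).2
  -- identify the value of the derivative
  simp only [hderiveq]
  refine main.congr_deriv ?_
  have e2 : (fun x => D (t, x))
      = fun x => 2 * (N x ⬝ᵥ curl3 (M t) x) - ∑ i : Fin 3, pder i G x i := funext F3
  rw [e2, integral_sub (f := fun x => 2 * (N x ⬝ᵥ curl3 (M t) x)) (g := fun x => ∑ i : Fin 3, pder i G x i)
      ((continuous_const.mul cNcurl).continuousOn.integrableOn_compact isCompact_Icc)
      (cdiv.continuousOn.integrableOn_compact isCompact_Icc),
    integral_const_mul, DMIAux.divergence_box L hL G hG]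

end
end

section
/- Exchange integration by parts under the chiral boundary condition: Let M : [0,T]×Ω → ℝ³ be continuously differentiable in time and twice continuously differentiable in space (with continuous mixed time–space derivatives), and suppose M satisfies the chiral boundary condition ∂M/∂ν = −(D/(2A)) M × ν on [0,T]×∂Ω, with A ≠ 0. Then for all t ∈ (0,T), ∫_Ω (∂M/∂t)·ΔM dx = (D/(2A)) ∫_{∂Ω} ( M × ∂M/∂t )·ν dS − (1/2) d/dt ∫_Ω |∇M|² dx. -/
open MeasureTheory Matrix

noncomputable section

section MyHelpers
open Set

lemma my_integral_Icc_peel {n : ℕ} (a b : Fin (n+1) → ℝ) (j : Fin (n+1))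
    (f : (Fin (n+1) → ℝ) → ℝ) (hf : Continuous f) :
    ∫ x in Icc a b, f x
      = ∫ s in Icc (a j) (b j),
          ∫ y in Icc (fun k => a (j.succAbove k)) (fun k => b (j.succAbove k)),
            f (j.insertNth s y) := by
  have mp := MeasureTheory.volume_preserving_piFinSuccAbove (fun _ : Fin (n+1) => ℝ) j
  set e := MeasurableEquiv.piFinSuccAbove (fun _ : Fin (n+1) => ℝ) j with he
  set S := Icc (a j) (b j) ×ˢ
      Icc (fun k => a (j.succAbove k)) (fun k => b (j.succAbove k)) with hS
  have hpre : Icc a b = e ⁻¹' S := by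
    ext x
    simp only [hS, he, MeasurableEquiv.piFinSuccAbove, MeasurableEquiv.coe_mk,
      Equiv.coe_fn_mk, Set.mem_preimage, Set.mem_prod, Set.mem_Icc, Pi.le_def,
      Fin.insertNthEquiv, Equiv.coe_fn_symm_mk, Fin.removeNth]
    rw [Fin.forall_iff_succAbove j, Fin.forall_iff_succAbove j (P := fun i => x i ≤ b i)]
    tauto
  have hsymm : ∀ p : ℝ × (Fin n → ℝ), e.symm p = j.insertNth p.1 p.2 := by
    intro p
    simp [he, MeasurableEquiv.piFinSuccAbove, Fin.insertNthEquiv]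
  have hcomp : (f ∘ e.symm) = fun p : ℝ × (Fin n → ℝ) => f (j.insertNth p.1 p.2) :=
    funext fun p => by simp [hsymm]
  have hcont : Continuous (f ∘ e.symm) := by
    rw [hcomp]
    exact hf.comp (Continuous.finInsertNth (A := fun _ : Fin (n+1) => ℝ) j
      continuous_fst continuous_snd)
  calc ∫ x in Icc a b, f x = ∫ x in e ⁻¹' S, (f ∘ e.symm) (e x) := by
        rw [hpre]; apply setIntegral_congr_fun (e.measurable (by measurability))
        intro x _; simp
    _ = ∫ p in S, (f ∘ e.symm) p :=
        mp.setIntegral_preimage_emb e.measurableEmbedding _ _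
    _ = ∫ s in Icc (a j) (b j),
          ∫ y in Icc (fun k => a (j.succAbove k)) (fun k => b (j.succAbove k)),
            f (j.insertNth s y) := by
        rw [hS, Measure.volume_eq_prod, setIntegral_prod]
        · apply integral_congr_ae; filter_upwards with s
          apply integral_congr_ae; filter_upwards with y
          simp only [Function.comp_apply, hsymm (s,y)]
        · exact hcont.continuousOn.integrableOn_compact (isCompact_Icc.prod isCompact_Icc)

lemma my_integral_Icc_fin1 (a b : Fin 1 → ℝ) (f : (Fin 1 → ℝ) → ℝ) :
    ∫ x in Icc a b, f x = ∫ s in Icc (a 0) (b 0), f (fun _ => s) := by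
  have mp := MeasureTheory.volume_preserving_funUnique (Fin 1) ℝ
  set e := MeasurableEquiv.funUnique (Fin 1) ℝ with he
  have hpre : Icc a b = e ⁻¹' Icc (a 0) (b 0) := by
    ext x
    simp only [he, MeasurableEquiv.funUnique, Set.mem_preimage, Set.mem_Icc, Pi.le_def,
      Equiv.funUnique, MeasurableEquiv.coe_mk, Equiv.coe_fn_mk]
    constructor
    · rintro ⟨h1, h2⟩; exact ⟨h1 0, h2 0⟩
    · rintro ⟨h1, h2⟩
      exact ⟨fun i => by rw [Subsingleton.elim i 0]; exact h1,
             fun i => by rw [Subsingleton.elim i 0]; exact h2⟩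
  have hsymm : ∀ s : ℝ, (e.symm s : Fin 1 → ℝ) = fun _ => s := fun s => rfl
  calc ∫ x in Icc a b, f x = ∫ x in e ⁻¹' Icc (a 0) (b 0), (f ∘ e.symm) (e x) := by
        rw [hpre]; apply setIntegral_congr_fun (e.measurable measurableSet_Icc)
        intro x _; simp
    _ = ∫ s in Icc (a 0) (b 0), (f ∘ e.symm) s :=
        mp.setIntegral_preimage_emb e.measurableEmbedding _ _
    _ = ∫ s in Icc (a 0) (b 0), f (fun _ => s) := by
        apply setIntegral_congr_fun measurableSet_Icc
        intro s _; simp [hsymm]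

lemma my_insertNth_pair (j : Fin 3) (s u v : ℝ) :
    j.insertNth s ![u, v] = ![![s, u, v], ![u, s, v], ![u, v, s]] j := by
  funext i
  fin_cases j <;> fin_cases i <;> rfl

lemma my_integral_Icc_fin2 (a b : Fin 2 → ℝ) (f : (Fin 2 → ℝ) → ℝ) (hf : Continuous f) :
    ∫ x in Icc a b, f x
      = ∫ u in Icc (a 0) (b 0), ∫ v in Icc (a 1) (b 1), f ![u, v] := by
  rw [my_integral_Icc_peel a b 0 f hf]
  apply setIntegral_congr_fun measurableSet_Icc
  intro u _
  have h1 : ∀ k : Fin 1, (0 : Fin 2).succAbove k = 1 := by decide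
  dsimp only
  rw [my_integral_Icc_fin1 _ _ _]
  have : ∀ v : ℝ, (0 : Fin 2).insertNth u (fun _ => v) = ![u, v] := by
    intro v; funext i; fin_cases i <;> simp [Fin.insertNth_zero]
  simp [h1, this]

lemma my_line_hasDerivAt (j : Fin 3) (y : Fin 2 → ℝ) (g : V3 → ℝ)
    (hg : Differentiable ℝ g) (s : ℝ) :
    HasDerivAt (fun t => g (j.insertNth t y))
      (fderiv ℝ g (j.insertNth s y) (unitVec j)) s := by
  have hline : ∀ t : ℝ, j.insertNth t y
      = ((j.insertNth 0 y : V3) + t • (unitVec j : V3)) := by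
    intro t; funext i
    refine Fin.succAboveCases j ?_ ?_ i
    · simp [unitVec]
    · intro k
      simp [unitVec, Fin.succAbove_ne, Pi.single_eq_of_ne (Fin.succAbove_ne j k)]
  have hφ : HasDerivAt (fun t : ℝ => (j.insertNth t y : V3)) ((unitVec j : V3)) s := by
    have h2 : (fun t : ℝ => (j.insertNth t y : V3))
        = fun t => (j.insertNth 0 y : V3) + t • (unitVec j : V3) := funext hline
    rw [h2]
    simpa using ((hasDerivAt_id s).smul_const ((unitVec j) : V3)).const_add
      ((j.insertNth (0:ℝ) y : V3))
  exact (hg (j.insertNth s y)).hasFDerivAt.comp_hasDerivAt s hφ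

lemma my_integral_pder_eq_face (L : V3) (hL : ∀ i, 0 < L i) (j : Fin 3)
    (g : V3 → ℝ) (hg : ContDiff ℝ 1 g) :
    ∫ x in Icc (0 : V3) L, fderiv ℝ g x (unitVec j)
      = ∫ y in Icc (0 : Fin 2 → ℝ) (fun k => L (j.succAbove k)),
          (g (j.insertNth (L j) y) - g (j.insertNth 0 y)) := by
  have hgd : Differentiable ℝ g := hg.differentiable one_ne_zero
  have hg' : Continuous fun x => fderiv ℝ g x (unitVec j) :=
    (hg.continuous_fderiv one_ne_zero).clm_apply continuous_const
  rw [my_integral_Icc_peel 0 L j _ hg']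
  have hswap : ∫ s in Icc ((0:V3) j) (L j),
      ∫ y in Icc (fun k => (0:V3) (j.succAbove k)) (fun k => L (j.succAbove k)),
        fderiv ℝ g (j.insertNth s y) (unitVec j)
      = ∫ y in Icc (fun k => (0:V3) (j.succAbove k)) (fun k => L (j.succAbove k)),
          ∫ s in Icc ((0:V3) j) (L j),
            fderiv ℝ g (j.insertNth s y) (unitVec j) := by
    apply integral_integral_swap
    have hcont : Continuous (Function.uncurry fun s y =>
        fderiv ℝ g (j.insertNth s y) (unitVec j)) := by
      apply hg'.comp
      exact Continuous.finInsertNth (A := fun _ : Fin 3 => ℝ) j continuous_fst continuous_snd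
    rw [Measure.prod_restrict]
    exact hcont.continuousOn.integrableOn_compact (isCompact_Icc.prod isCompact_Icc)
  rw [hswap]
  apply setIntegral_congr_fun measurableSet_Icc
  intro y _
  dsimp only
  have h0 : ((0:V3) j) = (0:ℝ) := rfl
  rw [h0, integral_Icc_eq_integral_Ioc, ← intervalIntegral.integral_of_le (le_of_lt (hL j))]
  exact intervalIntegral.integral_eq_sub_of_hasDerivAt
    (fun s _ => my_line_hasDerivAt j y g hgd s)
    ((hg'.comp (Continuous.finInsertNth (A := fun _ : Fin 3 => ℝ) j continuous_id
      continuous_const)).intervalIntegrable _ _)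

lemma my_cross_unit_dot (a c : V3) (κ : ℝ) (j : Fin 3) :
    ∑ i, ((-κ) • (a ⨯₃ unitVec j)) i * c i = κ * ((a ⨯₃ c) j) := by
  fin_cases j <;>
    simp [cross_apply, unitVec, Fin.sum_univ_three, Pi.single_apply] <;> ring

lemma my_neg_bc {u : V3 →L[ℝ] V3} {a : V3} {κ : ℝ} (j : Fin 3)
    (h : u (-(unitVec j)) = (-κ) • (a ⨯₃ (-(unitVec j)))) :
    u (unitVec j) = (-κ) • (a ⨯₃ (unitVec j)) := by
  have h2 : -(u (unitVec j)) = (-κ) • (-(a ⨯₃ unitVec j)) := by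
    rw [← map_neg, h, ← map_neg]
  have h3 := congrArg Neg.neg h2
  simp only [neg_neg] at h3
  rw [h3]; module

lemma my_core (L : V3) (hL : ∀ i, 0 < L i) (κ : ℝ) (u w : V3 → V3)
    (hu : ContDiff ℝ 2 u) (hw : ContDiff ℝ 1 w)
    (hbc : ∀ x ∈ Icc (0:V3) L, ∀ j : Fin 3, (x j = L j ∨ x j = 0) →
      fderiv ℝ u x (unitVec j) = (-κ) • (u x ⨯₃ unitVec j)) :
    ∫ x in Icc (0:V3) L, (∑ i, ∑ j, 2 * pder j u x i * pder j w x i)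
      = 2 * (κ * bdryInt L (fun x => u x ⨯₃ w x)
          - ∫ x in Icc (0:V3) L, w x ⬝ᵥ lap3 u x) := by
  have huc : Continuous u := hu.continuous
  have hwc : Continuous w := hw.continuous
  have hP1 : ∀ j : Fin 3, ContDiff ℝ 1 (pder j u) := by
    intro j
    have h : ContDiff ℝ 1 (fderiv ℝ u) := hu.fderiv_right (by norm_num)
    exact h.clm_apply contDiff_const
  have hPc : ∀ j, Continuous (pder j u) := fun j => (hP1 j).continuous
  have hPPc : ∀ j, Continuous (pder j (pder j u)) :=
    fun j => ((hP1 j).continuous_fderiv one_ne_zero).clm_apply continuous_const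
  have hWp : ∀ j, Continuous (pder j w) :=
    fun j => (hw.continuous_fderiv one_ne_zero).clm_apply continuous_const
  have hPci : ∀ i j : Fin 3, Continuous fun x => pder j u x i :=
    fun i j => continuous_pi_iff.mp (hPc j) i
  have hPPci : ∀ i j : Fin 3, Continuous fun x => pder j (pder j u) x i :=
    fun i j => continuous_pi_iff.mp (hPPc j) i
  have hWpci : ∀ i j : Fin 3, Continuous fun x => pder j w x i :=
    fun i j => continuous_pi_iff.mp (hWp j) i
  have hwci : ∀ i : Fin 3, Continuous fun x => w x i :=
    fun i => continuous_pi_iff.mp hwc i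
  have hint : ∀ f : V3 → ℝ, Continuous f → IntegrableOn f (Icc (0:V3) L) volume :=
    fun f hf => hf.continuousOn.integrableOn_compact isCompact_Icc
  have hh1 : ∀ (i j : Fin 3), ContDiff ℝ 1 (fun x => pder j u x i * w x i) :=
    fun i j => (contDiff_pi.mp (hP1 j) i).mul (contDiff_pi.mp hw i)
  have hfd : ∀ (i j : Fin 3) (x : V3), fderiv ℝ (fun x => pder j u x i * w x i) x (unitVec j)
      = pder j (pder j u) x i * w x i + pder j u x i * pder j w x i := by
    intro i j x
    have hP : HasFDerivAt (fun x => pder j u x i)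
        ((ContinuousLinearMap.proj (R := ℝ) (φ := fun _ : Fin 3 => ℝ) i).comp
          (fderiv ℝ (pder j u) x)) x := by
      exact (ContinuousLinearMap.proj (R := ℝ) (φ := fun _ : Fin 3 => ℝ) i).hasFDerivAt.comp x
        (((hP1 j).differentiable one_ne_zero) x).hasFDerivAt
    have hW : HasFDerivAt (fun x => w x i)
        ((ContinuousLinearMap.proj (R := ℝ) (φ := fun _ : Fin 3 => ℝ) i).comp
          (fderiv ℝ w x)) x := by
      exact (ContinuousLinearMap.proj (R := ℝ) (φ := fun _ : Fin 3 => ℝ) i).hasFDerivAt.comp x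
        ((hw.differentiable one_ne_zero) x).hasFDerivAt
    rw [show fderiv ℝ (fun x => pder j u x i * w x i) x = _ from (hP.mul hW).fderiv]
    simp only [ContinuousLinearMap.add_apply, ContinuousLinearMap.coe_smul', Pi.smul_apply,
      ContinuousLinearMap.coe_comp', Function.comp_apply, ContinuousLinearMap.proj_apply,
      smul_eq_mul]
    show pder j u x i * pder j w x i + w x i * pder j (pder j u) x i = _
    ring
  -- face identity for each pair (i, j)
  have hface : ∀ (i j : Fin 3),
      (∫ x in Icc (0:V3) L, pder j (pder j u) x i * w x i)
      + (∫ x in Icc (0:V3) L, pder j u x i * pder j w x i)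
      = ∫ y in Icc (0 : Fin 2 → ℝ) (fun k => L (j.succAbove k)),
          (pder j u (j.insertNth (L j) y) i * w (j.insertNth (L j) y) i
            - pder j u (j.insertNth 0 y) i * w (j.insertNth 0 y) i) := by
    intro i j
    have hA : Integrable (fun x => pder j (pder j u) x i * w x i)
        (volume.restrict (Icc (0:V3) L)) := hint _ ((hPPci i j).mul (hwci i))
    have hB : Integrable (fun x => pder j u x i * pder j w x i)
        (volume.restrict (Icc (0:V3) L)) := hint _ ((hPci i j).mul (hWpci i j))
    rw [← integral_add hA hB, ← my_integral_pder_eq_face L hL j _ (hh1 i j)]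
    apply setIntegral_congr_fun measurableSet_Icc
    intro x _
    exact (hfd i j x).symm
  -- membership of the face points
  have hmemT : ∀ (j : Fin 3) (y : Fin 2 → ℝ),
      y ∈ Icc (0 : Fin 2 → ℝ) (fun k => L (j.succAbove k)) →
        (j.insertNth (L j) y ∈ Icc (0:V3) L ∧ j.insertNth (0:ℝ) y ∈ Icc (0:V3) L) := by
    intro j y hy
    obtain ⟨hy1, hy2⟩ := hy
    refine ⟨⟨?_, ?_⟩, ⟨?_, ?_⟩⟩
    · rw [Fin.le_insertNth_iff]
      exact ⟨le_of_lt (hL j), fun k => hy1 k⟩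
    · rw [Fin.insertNth_le_iff]
      exact ⟨le_rfl, fun k => hy2 k⟩
    · rw [Fin.le_insertNth_iff]
      exact ⟨le_rfl, fun k => hy1 k⟩
    · rw [Fin.insertNth_le_iff]
      exact ⟨le_of_lt (hL j), fun k => hy2 k⟩
  have hbc' : ∀ (j : Fin 3) (z : V3), z ∈ Icc (0:V3) L → (z j = L j ∨ z j = 0) →
      ∑ i, pder j u z i * w z i = κ * ((u z ⨯₃ w z) j) := by
    intro j z hz hzj
    have h1 : pder j u z = (-κ) • (u z ⨯₃ unitVec j) := hbc z hz j hzj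
    rw [← my_cross_unit_dot (u z) (w z) κ j]
    exact Finset.sum_congr rfl fun i _ => by rw [h1]
  set G : V3 → V3 := fun x => u x ⨯₃ w x with hGdef
  have hGc : Continuous G := by
    have h : G = fun x => ![u x 1 * w x 2 - u x 2 * w x 1,
        u x 2 * w x 0 - u x 0 * w x 2, u x 0 * w x 1 - u x 1 * w x 0] :=
      funext fun x => cross_apply (u x) (w x)
    rw [h]
    apply continuous_pi
    intro i
    fin_cases i <;>
      simp only [Matrix.cons_val_zero, Matrix.cons_val_one, Matrix.head_cons,
        Matrix.cons_val_two, Matrix.tail_cons] <;>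
      exact (((continuous_pi_iff.mp huc _).mul (continuous_pi_iff.mp hwc _)).sub
        ((continuous_pi_iff.mp huc _).mul (continuous_pi_iff.mp hwc _)))
  have hinsc : ∀ (j : Fin 3) (c : ℝ), Continuous (fun y : Fin 2 → ℝ => (j.insertNth c y : V3)) :=
    fun j c => Continuous.finInsertNth (A := fun _ : Fin 3 => ℝ) j continuous_const continuous_id
  have hfaceSum : ∀ j : Fin 3,
      ∑ i : Fin 3, ∫ y in Icc (0 : Fin 2 → ℝ) (fun k => L (j.succAbove k)),
          (pder j u (j.insertNth (L j) y) i * w (j.insertNth (L j) y) i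
            - pder j u (j.insertNth 0 y) i * w (j.insertNth 0 y) i)
      = κ * ∫ y in Icc (0 : Fin 2 → ℝ) (fun k => L (j.succAbove k)),
          (G (j.insertNth (L j) y) j - G (j.insertNth 0 y) j) := by
    intro j
    have hIT : ∀ i : Fin 3, Integrable (fun y : Fin 2 → ℝ =>
        pder j u (j.insertNth (L j) y) i * w (j.insertNth (L j) y) i
          - pder j u (j.insertNth 0 y) i * w (j.insertNth 0 y) i)
        (volume.restrict (Icc (0 : Fin 2 → ℝ) (fun k => L (j.succAbove k)))) := by
      intro i
      apply ContinuousOn.integrableOn_compact isCompact_Icc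
      apply Continuous.continuousOn
      exact (((hPci i j).comp (hinsc j (L j))).mul ((hwci i).comp (hinsc j (L j)))).sub
        (((hPci i j).comp (hinsc j 0)).mul ((hwci i).comp (hinsc j 0)))
    rw [← integral_finset_sum _ (fun i _ => hIT i), ← integral_const_mul]
    apply setIntegral_congr_fun measurableSet_Icc
    intro y hy
    dsimp only
    obtain ⟨hT, hB⟩ := hmemT j y hy
    have h1 := hbc' j _ hT (Or.inl (by simp))
    have h2 := hbc' j _ hB (Or.inr (by simp))
    rw [Finset.sum_sub_distrib, h1, h2]
    simp only [hGdef]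
    ring
  -- claim 2 : the Laplacian term
  have hclaim2 : ∫ x in Icc (0:V3) L, w x ⬝ᵥ lap3 u x
      = ∑ i : Fin 3, ∑ j : Fin 3, ∫ x in Icc (0:V3) L, pder j (pder j u) x i * w x i := by
    have hptw : ∀ x : V3, w x ⬝ᵥ lap3 u x
        = ∑ i, ∑ j, pder j (pder j u) x i * w x i := by
      intro x
      unfold lap3 dotProduct
      refine Finset.sum_congr rfl (fun i _ => ?_)
      rw [Finset.sum_apply, Finset.mul_sum]
      exact Finset.sum_congr rfl fun j _ => mul_comm _ _
    have hI1 : ∀ i : Fin 3, Integrable (fun x => ∑ j, pder j (pder j u) x i * w x i)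
        (volume.restrict (Icc (0:V3) L)) :=
      fun i => hint _ (continuous_finset_sum _ fun j _ => (hPPci i j).mul (hwci i))
    have hI2 : ∀ i j : Fin 3, Integrable (fun x => pder j (pder j u) x i * w x i)
        (volume.restrict (Icc (0:V3) L)) :=
      fun i j => hint _ ((hPPci i j).mul (hwci i))
    rw [setIntegral_congr_fun measurableSet_Icc (fun x _ => hptw x),
      integral_finset_sum _ (fun i _ => hI1 i)]
    exact Finset.sum_congr rfl fun i _ => integral_finset_sum _ (fun j _ => hI2 i j)
  -- claim 1 : the boundary term
  have hcf : ∀ (j j' : Fin 3) (c : ℝ),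
      Continuous (fun y : Fin 2 → ℝ => G (j.insertNth (L j) y) j' - G (j.insertNth c y) j') :=
    fun j j' c => ((continuous_pi_iff.mp hGc j').comp (hinsc j (L j))).sub
      ((continuous_pi_iff.mp hGc j').comp (hinsc j c))
  have hE0 : (∫ y in Icc (0 : Fin 2 → ℝ) (fun k => L ((0:Fin 3).succAbove k)),
        (G ((0:Fin 3).insertNth (L 0) y) 0 - G ((0:Fin 3).insertNth 0 y) 0))
      = ∫ y in Icc (0:ℝ) (L 1), ∫ z in Icc (0:ℝ) (L 2),
          (G ![L 0, y, z] 0 - G ![0, y, z] 0) := by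
    rw [my_integral_Icc_fin2 _ _ _ (hcf 0 0 0)]
    simp only [Pi.zero_apply, show ((0:Fin 3).succAbove (0:Fin 2)) = (1:Fin 3) from rfl,
      show ((0:Fin 3).succAbove (1:Fin 2)) = (2:Fin 3) from rfl]
    apply setIntegral_congr_fun measurableSet_Icc
    intro s _
    apply setIntegral_congr_fun measurableSet_Icc
    intro v _
    dsimp only
    rw [my_insertNth_pair, my_insertNth_pair]
    rfl
  have hE1 : (∫ y in Icc (0 : Fin 2 → ℝ) (fun k => L ((1:Fin 3).succAbove k)),
        (G ((1:Fin 3).insertNth (L 1) y) 1 - G ((1:Fin 3).insertNth 0 y) 1))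
      = ∫ x in Icc (0:ℝ) (L 0), ∫ z in Icc (0:ℝ) (L 2),
          (G ![x, L 1, z] 1 - G ![x, 0, z] 1) := by
    rw [my_integral_Icc_fin2 _ _ _ (hcf 1 1 0)]
    simp only [Pi.zero_apply, show ((1:Fin 3).succAbove (0:Fin 2)) = (0:Fin 3) from rfl,
      show ((1:Fin 3).succAbove (1:Fin 2)) = (2:Fin 3) from rfl]
    apply setIntegral_congr_fun measurableSet_Icc
    intro s _
    apply setIntegral_congr_fun measurableSet_Icc
    intro v _
    dsimp only
    rw [my_insertNth_pair, my_insertNth_pair]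
    rfl
  have hE2 : (∫ y in Icc (0 : Fin 2 → ℝ) (fun k => L ((2:Fin 3).succAbove k)),
        (G ((2:Fin 3).insertNth (L 2) y) 2 - G ((2:Fin 3).insertNth 0 y) 2))
      = ∫ x in Icc (0:ℝ) (L 0), ∫ y in Icc (0:ℝ) (L 1),
          (G ![x, y, L 2] 2 - G ![x, y, 0] 2) := by
    rw [my_integral_Icc_fin2 _ _ _ (hcf 2 2 0)]
    simp only [Pi.zero_apply, show ((2:Fin 3).succAbove (0:Fin 2)) = (0:Fin 3) from rfl,
      show ((2:Fin 3).succAbove (1:Fin 2)) = (1:Fin 3) from rfl]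
    apply setIntegral_congr_fun measurableSet_Icc
    intro s _
    apply setIntegral_congr_fun measurableSet_Icc
    intro v _
    dsimp only
    rw [my_insertNth_pair, my_insertNth_pair]
    rfl
  have hclaim1 : ∑ j : Fin 3, (κ * ∫ y in Icc (0 : Fin 2 → ℝ) (fun k => L (j.succAbove k)),
      (G (j.insertNth (L j) y) j - G (j.insertNth 0 y) j)) = κ * bdryInt L G := by
    rw [Fin.sum_univ_three, hE0, hE1, hE2]
    unfold bdryInt
    ring
  -- split the integral of the double sum
  have hIs1 : ∀ i : Fin 3, Integrable (fun x => ∑ j, 2 * pder j u x i * pder j w x i)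
      (volume.restrict (Icc (0:V3) L)) :=
    fun i => hint _ (continuous_finset_sum _ fun j _ =>
      (continuous_const.mul (hPci i j)).mul (hWpci i j))
  have hIs2 : ∀ i j : Fin 3, Integrable (fun x => 2 * pder j u x i * pder j w x i)
      (volume.restrict (Icc (0:V3) L)) :=
    fun i j => hint _ ((continuous_const.mul (hPci i j)).mul (hWpci i j))
  have hsplit : ∫ x in Icc (0:V3) L, (∑ i, ∑ j, 2 * pder j u x i * pder j w x i)
      = ∑ i : Fin 3, ∑ j : Fin 3, 2 * ∫ x in Icc (0:V3) L, pder j u x i * pder j w x i := by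
    rw [integral_finset_sum _ (fun i _ => hIs1 i)]
    refine Finset.sum_congr rfl fun i _ => ?_
    rw [integral_finset_sum _ (fun j _ => hIs2 i j)]
    refine Finset.sum_congr rfl fun j _ => ?_
    rw [← integral_const_mul]
    apply setIntegral_congr_fun measurableSet_Icc
    intro x _
    ring
  rw [hsplit, hclaim2, ← hclaim1]
  have hAB : ∀ (i j : Fin 3), (∫ x in Icc (0:V3) L, pder j u x i * pder j w x i)
      = (∫ y in Icc (0 : Fin 2 → ℝ) (fun k => L (j.succAbove k)),
          (pder j u (j.insertNth (L j) y) i * w (j.insertNth (L j) y) i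
            - pder j u (j.insertNth 0 y) i * w (j.insertNth 0 y) i))
        - ∫ x in Icc (0:V3) L, pder j (pder j u) x i * w x i := by
    intro i j
    rw [← hface i j]; ring
  calc ∑ i : Fin 3, ∑ j : Fin 3, 2 * ∫ x in Icc (0:V3) L, pder j u x i * pder j w x i
      = 2 * ((∑ j : Fin 3, ∑ i : Fin 3,
            ∫ y in Icc (0 : Fin 2 → ℝ) (fun k => L (j.succAbove k)),
            (pder j u (j.insertNth (L j) y) i * w (j.insertNth (L j) y) i
              - pder j u (j.insertNth 0 y) i * w (j.insertNth 0 y) i))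
        - ∑ i : Fin 3, ∑ j : Fin 3, ∫ x in Icc (0:V3) L, pder j (pder j u) x i * w x i) := by
        rw [Finset.sum_comm (s := (Finset.univ : Finset (Fin 3)))
          (t := (Finset.univ : Finset (Fin 3)))
          (f := fun j i => ∫ y in Icc (0 : Fin 2 → ℝ) (fun k => L (j.succAbove k)),
            (pder j u (j.insertNth (L j) y) i * w (j.insertNth (L j) y) i
              - pder j u (j.insertNth 0 y) i * w (j.insertNth 0 y) i))]
        rw [mul_sub, Finset.mul_sum, Finset.mul_sum, ← Finset.sum_sub_distrib]
        refine Finset.sum_congr rfl fun i _ => ?_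
        rw [Finset.mul_sum, Finset.mul_sum, ← Finset.sum_sub_distrib]
        refine Finset.sum_congr rfl fun j _ => ?_
        rw [hAB i j]
        ring
    _ = 2 * ((∑ j : Fin 3, (κ * ∫ y in Icc (0 : Fin 2 → ℝ) (fun k => L (j.succAbove k)),
            (G (j.insertNth (L j) y) j - G (j.insertNth 0 y) j)))
        - ∑ i : Fin 3, ∑ j : Fin 3, ∫ x in Icc (0:V3) L, pder j (pder j u) x i * w x i) := by
        have := Finset.sum_congr rfl (fun j (_ : j ∈ (Finset.univ : Finset (Fin 3))) => hfaceSum j)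
        rw [this]

end MyHelpers

set_option maxHeartbeats 2000000 in
/-- **Exchange integration by parts under the chiral boundary condition.**
If `M` is smooth enough and satisfies the chiral boundary condition
`∂M/∂ν = −(D/(2A)) M × ν` on `[0,T] × ∂Ω` with `A ≠ 0`, then for all `t ∈ (0,T)`,
`∫_Ω (∂M/∂t)·ΔM dx = (D/(2A)) ∫_{∂Ω} (M × ∂M/∂t)·ν dS − (1/2) d/dt ∫_Ω |∇M|² dx`,
stated as: the function `t ↦ ∫_Ω |∇M|² dx` has derivative
`2 ((D/(2A)) ∫_{∂Ω} (M × ∂M/∂t)·ν dS − ∫_Ω (∂M/∂t)·ΔM dx)` at `t`. -/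
theorem exchange_integration_by_parts (T A D : ℝ) (hT : 0 < T) (hA : A ≠ 0)
    (L : V3) (hL : ∀ i, 0 < L i)
    (M : ℝ → V3 → V3) (hM : ContDiff ℝ 2 (fun p : ℝ × V3 => M p.1 p.2))
    (hBC : ∀ t ∈ Set.Icc (0:ℝ) T, chiralBC L (D / (2*A)) (M t)) :
    ∀ t ∈ Set.Ioo (0:ℝ) T,
      HasDerivAt (fun s => ∫ x in Set.Icc (0:V3) L, gradSq (M s) x)
        (2 * ((D / (2*A)) * bdryInt L (fun x => (M t x) ⨯₃ (deriv (fun s => M s x) t))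
          - ∫ x in Set.Icc (0:V3) L,
              (deriv (fun s => M s x) t) ⬝ᵥ (lap3 (M t) x))) t := by
  intro t ht
  set κ := D / (2*A) with hκdef
  -- the joint function and its derivatives
  set F : ℝ × V3 → V3 := fun p : ℝ × V3 => M p.1 p.2 with hFdef
  have hF2 : ContDiff ℝ 2 F := hM
  set F' := fderiv ℝ F with hF'def
  have hF'1 : ContDiff ℝ 1 F' := hF2.fderiv_right (by norm_num)
  have hF'c : Continuous F' := hF'1.continuous
  have hF'd : Differentiable ℝ F' := hF'1.differentiable one_ne_zero
  have hFd : Differentiable ℝ F := hF2.differentiable (by norm_num)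
  have hF'at : ∀ p, HasFDerivAt F (F' p) p := fun p => (hFd p).hasFDerivAt
  set F'' := fderiv ℝ F' with hF''def
  have hF''c : Continuous F'' := hF'1.continuous_fderiv one_ne_zero
  have hemb : ∀ (s : ℝ) (x : V3), HasFDerivAt (fun x : V3 => ((s, x) : ℝ × V3))
      (((0 : V3 →L[ℝ] ℝ)).prod (ContinuousLinearMap.id ℝ V3)) x :=
    fun s x => (hasFDerivAt_const s x).prodMk (hasFDerivAt_id x)
  have hslice : ∀ (s : ℝ) (x : V3), HasFDerivAt (M s)
      ((F' (s,x)).comp (((0 : V3 →L[ℝ] ℝ)).prod (ContinuousLinearMap.id ℝ V3))) x :=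
    fun s x => (hF'at (s,x)).comp x (hemb s x)
  have hpder : ∀ (s : ℝ) (x : V3) (j : Fin 3),
      pder j (M s) x = F' (s,x) ((0:ℝ), unitVec j) := by
    intro s x j
    unfold pder
    rw [(hslice s x).fderiv]
    rfl
  have htime : ∀ (x : V3) (s : ℝ), HasDerivAt (fun s' => M s' x) (F' (s,x) (1, 0)) s :=
    fun x s => (hF'at (s,x)).comp_hasDerivAt (f := fun s' => (s', x)) s ((hasDerivAt_id s).prodMk (hasDerivAt_const s x))
  set w : V3 → V3 := fun x => F' (t, x) (1, 0) with hwdef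
  have hw_deriv : ∀ x, deriv (fun s => M s x) t = w x := fun x => (htime x t).deriv
  have hw1 : ContDiff ℝ 1 w :=
    (hF'1.comp (contDiff_const.prodMk contDiff_id)).clm_apply contDiff_const
  have hu2 : ContDiff ℝ 2 (M t) := hF2.comp (contDiff_const.prodMk contDiff_id)
  have hsymm : ∀ (x : V3) (v v' : ℝ × V3), F'' (t,x) v v' = F'' (t,x) v' v :=
    fun x => second_derivative_symmetric hF'at ((hF'd (t,x)).hasFDerivAt)
  have hF'time : ∀ (x : V3) (s : ℝ) (v : ℝ × V3),
      HasDerivAt (fun s' => F' (s', x) v) (F'' (s,x) (1,0) v) s := by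
    intro x s v
    have h1 : HasDerivAt (fun s' => F' (s', x)) (F'' (s,x) (1,0)) s :=
      (hF'd (s,x)).hasFDerivAt.comp_hasDerivAt (f := fun s' => (s', x)) s
        ((hasDerivAt_id s).prodMk (hasDerivAt_const s x))
    exact ((ContinuousLinearMap.apply ℝ V3 v).hasFDerivAt.comp_hasDerivAt s h1)
  have hwfder : ∀ (x : V3) (j : Fin 3),
      pder j w x = F'' (t,x) ((0:ℝ), unitVec j) (1, 0) := by
    intro x j
    have h1 : HasFDerivAt (fun x : V3 => F' (t, x)) ((F'' (t,x)).comp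
        (((0 : V3 →L[ℝ] ℝ)).prod (ContinuousLinearMap.id ℝ V3))) x :=
      ((hF'd (t,x)).hasFDerivAt).comp x (hemb t x)
    have h2 : HasFDerivAt w ((ContinuousLinearMap.apply ℝ V3 ((1:ℝ),(0:V3))).comp
        ((F'' (t,x)).comp (((0 : V3 →L[ℝ] ℝ)).prod (ContinuousLinearMap.id ℝ V3)))) x :=
      (ContinuousLinearMap.apply ℝ V3 ((1:ℝ),(0:V3))).hasFDerivAt.comp x h1
    unfold pder
    rw [h2.fderiv]
    rfl
  -- the boundary condition in normalized form
  have hbcU : ∀ x ∈ Set.Icc (0:V3) L, ∀ j : Fin 3, (x j = L j ∨ x j = 0) →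
      fderiv ℝ (M t) x (unitVec j) = (-κ) • (M t x ⨯₃ unitVec j) := by
    intro x hx j hj
    have htmem : t ∈ Set.Icc (0:ℝ) T := ⟨ht.1.le, ht.2.le⟩
    rcases hj with h | h
    · exact ((hBC t htmem) x hx j).1 h
    · exact my_neg_bc j (((hBC t htmem) x hx j).2 h)
  -- pointwise derivative in time of gradSq
  have hgrad_eq : ∀ (s : ℝ) (x : V3),
      gradSq (M s) x = ∑ i : Fin 3, ∑ j : Fin 3, (F' (s,x) ((0:ℝ), unitVec j) i)^2 := by
    intro s x
    unfold gradSq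
    exact Finset.sum_congr rfl fun i _ => Finset.sum_congr rfl fun j _ => by rw [hpder s x j]
  set g₀ : ℝ → V3 → ℝ := fun s x => ∑ i : Fin 3, ∑ j : Fin 3,
      2 * (F' (s,x) ((0:ℝ), unitVec j) i) * (F'' (s,x) ((1:ℝ),(0:V3)) ((0:ℝ), unitVec j) i)
    with hg₀def
  have hqderiv : ∀ (x : V3) (s : ℝ), HasDerivAt (fun s' => gradSq (M s') x) (g₀ s x) s := by
    intro x s
    have h1 : (fun s' => gradSq (M s') x)
        = fun s' => ∑ i : Fin 3, ∑ j : Fin 3, (F' (s',x) ((0:ℝ), unitVec j) i)^2 :=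
      funext fun s' => hgrad_eq s' x
    rw [h1, hg₀def]
    apply HasDerivAt.fun_sum
    intro i _
    apply HasDerivAt.fun_sum
    intro j _
    have hD : HasDerivAt (fun s' => F' (s', x) ((0:ℝ), unitVec j) i)
        (F'' (s,x) ((1:ℝ),(0:V3)) ((0:ℝ), unitVec j) i) s := by
      exact (ContinuousLinearMap.proj (R := ℝ) (φ := fun _ : Fin 3 => ℝ) i).hasFDerivAt.comp_hasDerivAt
        s (hF'time x s ((0:ℝ), unitVec j))
    have h2 := hD.fun_pow 2
    refine h2.congr_deriv ?_
    push_cast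
    ring
  -- joint continuity of g₀
  have hg₀c : Continuous (fun p : ℝ × V3 => g₀ p.1 p.2) := by
    apply continuous_finset_sum
    intro i _
    apply continuous_finset_sum
    intro j _
    have hc1 : Continuous (fun p : ℝ × V3 => F' p ((0:ℝ), unitVec j) i) :=
      (continuous_apply i).comp (hF'c.clm_apply continuous_const)
    have hc2 : Continuous (fun p : ℝ × V3 => F'' p ((1:ℝ),(0:V3)) ((0:ℝ), unitVec j) i) :=
      (continuous_apply i).comp ((hF''c.clm_apply continuous_const).clm_apply continuous_const)
    exact (continuous_const.mul hc1).mul hc2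
  have hg₀xc : ∀ s : ℝ, Continuous (fun x : V3 => g₀ s x) :=
    fun s => hg₀c.comp (continuous_const.prodMk continuous_id)
  have hqc : ∀ s : ℝ, Continuous (fun x : V3 => gradSq (M s) x) := by
    intro s
    have h1 : (fun x : V3 => gradSq (M s) x)
        = fun x => ∑ i : Fin 3, ∑ j : Fin 3, (F' (s,x) ((0:ℝ), unitVec j) i)^2 :=
      funext fun x => hgrad_eq s x
    rw [h1]
    apply continuous_finset_sum
    intro i _
    apply continuous_finset_sum
    intro j _
    exact ((continuous_apply i).comp ((hF'c.comp
      (continuous_const.prodMk continuous_id)).clm_apply continuous_const)).pow 2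
  -- dominated differentiation under the integral sign
  set μ := volume.restrict (Set.Icc (0:V3) L) with hμdef
  have hfin : IsFiniteMeasure μ := by
    constructor
    rw [hμdef, Measure.restrict_apply_univ]
    exact isCompact_Icc.measure_lt_top
  obtain ⟨C, hC⟩ := IsCompact.exists_bound_of_continuousOn
    ((isCompact_Icc (a := t - 1) (b := t + 1)).prod (isCompact_Icc (a := (0:V3)) (b := L)))
    hg₀c.continuousOn
  have key := hasDerivAt_integral_of_dominated_loc_of_deriv_le (μ := μ)
    (F := fun s x => gradSq (M s) x) (F' := fun s x => g₀ s x) (x₀ := t)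
    (bound := fun _ => C) (s := Metric.ball t 1) (Metric.ball_mem_nhds t one_pos)
    (Filter.Eventually.of_forall fun s => ((hqc s).aestronglyMeasurable))
    ((hqc t).continuousOn.integrableOn_compact isCompact_Icc)
    ((hg₀xc t).aestronglyMeasurable)
    ?hbound ?hbint ?hdiff
  case hbound =>
    filter_upwards [ae_restrict_mem measurableSet_Icc] with x hx
    intro s hs
    apply hC (s, x)
    refine ⟨?_, hx⟩
    rw [Metric.mem_ball, Real.dist_eq] at hs
    constructor <;> [linarith [abs_lt.mp hs]; linarith [abs_lt.mp hs]]
  case hbint => exact integrable_const C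
  case hdiff =>
    filter_upwards with x
    intro s _
    exact hqderiv x s
  -- identify the value of the derivative
  have hval : (∫ x, g₀ t x ∂μ)
      = ∫ x in Set.Icc (0:V3) L, (∑ i : Fin 3, ∑ j : Fin 3,
          2 * pder j (M t) x i * pder j w x i) := by
    apply setIntegral_congr_fun measurableSet_Icc
    intro x _
    refine Finset.sum_congr rfl fun i _ => Finset.sum_congr rfl fun j _ => ?_
    rw [hpder t x j, hwfder x j, hsymm x ((0:ℝ), unitVec j) ((1:ℝ),(0:V3))]
  have hcore := my_core L hL κ (M t) w hu2 hw1 hbcU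
  have hfinal : (∫ x, g₀ t x ∂μ)
      = 2 * (κ * bdryInt L (fun x => (M t x) ⨯₃ (deriv (fun s => M s x) t))
          - ∫ x in Set.Icc (0:V3) L,
              (deriv (fun s => M s x) t) ⬝ᵥ (lap3 (M t) x)) := by
    rw [hval, hcore]
    have e1 : (fun x => (M t x) ⨯₃ (deriv (fun s => M s x) t))
        = fun x => (M t x) ⨯₃ (w x) := funext fun x => by rw [hw_deriv x]
    have e2 : ∫ x in Set.Icc (0:V3) L, (deriv (fun s => M s x) t) ⬝ᵥ (lap3 (M t) x)
        = ∫ x in Set.Icc (0:V3) L, w x ⬝ᵥ lap3 (M t) x := by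
      apply setIntegral_congr_fun measurableSet_Icc
      intro x _
      dsimp only
      rw [hw_deriv x]
    rw [e1, e2]
  rw [← hfinal]
  exact key.2

end
end
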